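/- arXiv:1001.3326 — 10 statements merged into one kernel-verified Lean document; each statement's English description precedes it below -/
import Mathlib

section
/- Suppose a metric space (X,d) is L-bi-Lipschitz equivalent to an ultrametric space for some L ≥ 1, and let q > 1. Then there exists Γ ≥ 1, depending only on L, such that for every integer n ≥ 1 and every even integer m with m ≥ (n·3^n)^{1/(q-1)}, every map f : (ℤ/mℤ)^n → X satisfies E_ε Σ_{j=1}^n d(f(ε),f_j(ε))^q ≤ Γ^q m^q E_ε E_δ d(f(ε),f_δ(ε))^q. In particular, (X,d) supports a metric cotype q inequality for every q > 1. -/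
open scoped BigOperators

noncomputable def cotypeLHS {X : Type*} [PseudoMetricSpace X] (p : ℝ) (n m : ℕ) (hm : m ≠ 0)
    (f : (Fin n → ZMod m) → X) : ℝ :=
  haveI : NeZero m := ⟨hm⟩
  (∑ ε : Fin n → ZMod m, ∑ j : Fin n,
      dist (f ε) (f (ε + fun i => if i = j then ((m / 2 : ℕ) : ZMod m) else 0)) ^ p) / (m : ℝ) ^ n

noncomputable def cotypeRHS {X : Type*} [PseudoMetricSpace X] (p : ℝ) (n m : ℕ) (hm : m ≠ 0)
    (f : (Fin n → ZMod m) → X) : ℝ :=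
  haveI : NeZero m := ⟨hm⟩
  (∑ ε : Fin n → ZMod m, ∑ δ : Fin n → Fin 3,
      dist (f ε) (f (ε + fun i => (((δ i : ℤ) - 1 : ℤ) : ZMod m))) ^ p) / ((m : ℝ) ^ n * 3 ^ n)

/-- The `(p,q)`-metric cotype inequality with constant `Γ` for given `n` and `m`. -/
def SatisfiesCotype (X : Type*) [PseudoMetricSpace X] (p q Γ : ℝ) (n m : ℕ) (hm : m ≠ 0) : Prop :=
  ∀ f : (Fin n → ZMod m) → X,
    cotypeLHS p n m hm f ≤ Γ ^ p * (m : ℝ) ^ p * (n : ℝ) ^ (1 - p / q) * cotypeRHS p n m hm f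

/-- `X` supports a `(p,q)`-metric cotype inequality. -/
def SupportsCotype (X : Type*) [PseudoMetricSpace X] (p q : ℝ) : Prop :=
  ∃ Γ : ℝ, 1 ≤ Γ ∧ ∃ m : ℕ → ℕ, ∃ h : ∀ n, Even (m n) ∧ 0 < m n,
    ∀ n, SatisfiesCotype X p q Γ n (m n) (h n).2.ne'

private lemma ultra_path {Y : Type*} [MetricSpace Y]
    (hY : ∀ x y z : Y, dist x y ≤ max (dist x z) (dist z y))
    (g : ℕ → Y) : ∀ k : ℕ, 1 ≤ k → ∃ s, s < k ∧ dist (g 0) (g k) ≤ dist (g s) (g (s+1)) := by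
  intro k
  induction k with
  | zero => intro h; omega
  | succ k ih =>
    intro _
    rcases Nat.eq_zero_or_pos k with hk0 | hk1
    · subst hk0; exact ⟨0, Nat.lt_succ_self 0, le_refl _⟩
    · obtain ⟨s, hs, hle⟩ := ih hk1
      rcases le_max_iff.mp (hY (g 0) (g (k+1)) (g k)) with h' | h'
      · exact ⟨s, by omega, h'.trans hle⟩
      · exact ⟨k, by omega, h'⟩

private lemma biLip_path {X Y : Type*} [MetricSpace X] [MetricSpace Y]
    (hY : ∀ x y z : Y, dist x y ≤ max (dist x z) (dist z y))
    (L : ℝ) (hL : 1 ≤ L) (φ : Y ≃ X)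
    (hφ : ∀ x y : Y, dist x y / L ≤ dist (φ x) (φ y) ∧ dist (φ x) (φ y) ≤ L * dist x y)
    (g : ℕ → X) (k : ℕ) (hk : 1 ≤ k) :
    ∃ s, s < k ∧ dist (g 0) (g k) ≤ L^2 * dist (g s) (g (s+1)) := by
  obtain ⟨s, hs, hle⟩ := ultra_path hY (fun t => φ.symm (g t)) k hk
  refine ⟨s, hs, ?_⟩
  have hL0 : (0:ℝ) < L := lt_of_lt_of_le one_pos hL
  have h1 := (hφ (φ.symm (g 0)) (φ.symm (g k))).2
  have h2 := (hφ (φ.symm (g s)) (φ.symm (g (s+1)))).1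
  rw [Equiv.apply_symm_apply, Equiv.apply_symm_apply] at h1 h2
  have h2' : dist (φ.symm (g s)) (φ.symm (g (s+1))) ≤ L * dist (g s) (g (s+1)) := by
    rw [div_le_iff₀ hL0] at h2; linarith [h2]
  calc dist (g 0) (g k) ≤ L * dist (φ.symm (g 0)) (φ.symm (g k)) := h1
    _ ≤ L * dist (φ.symm (g s)) (φ.symm (g (s+1))) := mul_le_mul_of_nonneg_left hle hL0.le
    _ ≤ L * (L * dist (g s) (g (s+1))) := mul_le_mul_of_nonneg_left h2' hL0.le
    _ = L^2 * dist (g s) (g (s+1)) := by ring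

private lemma main_ineq {X Y : Type*} [MetricSpace X] [MetricSpace Y]
    (hY : ∀ x y z : Y, dist x y ≤ max (dist x z) (dist z y))
    (L : ℝ) (hL : 1 ≤ L) (φ : Y ≃ X)
    (hφ : ∀ x y : Y, dist x y / L ≤ dist (φ x) (φ y) ∧ dist (φ x) (φ y) ≤ L * dist x y)
    (q : ℝ) (hq : 1 < q) (n : ℕ) (hn : 1 ≤ n) (m : ℕ) (hme : Even m)
    (hmq : ((n : ℝ) * 3 ^ n) ^ (1 / (q - 1)) ≤ (m : ℝ)) (hm : m ≠ 0)
    (f : (Fin n → ZMod m) → X) :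
    cotypeLHS q n m hm f ≤ (L^2) ^ q * (m : ℝ) ^ q * cotypeRHS q n m hm f := by
  haveI : NeZero m := ⟨hm⟩
  have hq0 : (0:ℝ) < q := by linarith
  have hL2 : (0:ℝ) ≤ L^2 := sq_nonneg L
  have hm2 : 1 ≤ m / 2 := by obtain ⟨r, hr⟩ := hme; omega
  set e : Fin n → (Fin n → ZMod m) := fun j i => if i = j then 1 else 0 with he
  -- pointwise bound via the ultrametric path
  have key : ∀ (ε : Fin n → ZMod m) (j : Fin n),
      dist (f ε) (f (ε + fun i => if i = j then ((m / 2 : ℕ) : ZMod m) else 0)) ^ q ≤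
      (L^2) ^ q * ∑ s ∈ Finset.range (m/2),
        dist (f (ε + s • e j)) (f (ε + (s+1) • e j)) ^ q := by
    intro ε j
    set g : ℕ → X := fun s => f (ε + s • e j) with hg
    have h0 : g 0 = f ε := by
      simp only [hg]; rw [zero_smul, add_zero]
    have hhalf : g (m/2) = f (ε + fun i => if i = j then ((m / 2 : ℕ) : ZMod m) else 0) := by
      simp only [hg]
      congr 1
      funext i
      simp only [Pi.add_apply, Pi.smul_apply, he]
      split_ifs with h
      · simp [nsmul_eq_mul]
      · simp
    obtain ⟨s, hs, hle⟩ := biLip_path hY L hL φ hφ g (m/2) hm2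
    rw [← h0, ← hhalf]
    calc dist (g 0) (g (m/2)) ^ q ≤ (L^2) ^ q * dist (g s) (g (s+1)) ^ q := by
          rw [← Real.mul_rpow hL2 dist_nonneg]
          exact Real.rpow_le_rpow dist_nonneg hle hq0.le
      _ ≤ (L^2) ^ q * ∑ s ∈ Finset.range (m/2), dist (g s) (g (s+1)) ^ q := by
          refine mul_le_mul_of_nonneg_left ?_ (Real.rpow_nonneg hL2 q)
          exact Finset.single_le_sum (f := fun s => dist (g s) (g (s+1)) ^ q)
            (fun i _ => Real.rpow_nonneg dist_nonneg q) (Finset.mem_range.mpr hs)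
  -- sum the pointwise bound
  have step1 : (∑ ε : Fin n → ZMod m, ∑ j : Fin n,
      dist (f ε) (f (ε + fun i => if i = j then ((m / 2 : ℕ) : ZMod m) else 0)) ^ q)
      ≤ (L^2) ^ q * ∑ ε : Fin n → ZMod m, ∑ j : Fin n, ∑ s ∈ Finset.range (m/2),
          dist (f (ε + s • e j)) (f (ε + (s+1) • e j)) ^ q := by
    rw [Finset.mul_sum]
    refine Finset.sum_le_sum fun ε _ => ?_
    rw [Finset.mul_sum]
    exact Finset.sum_le_sum fun j _ => key ε j
  -- translation invariance
  have step2 : (∑ ε : Fin n → ZMod m, ∑ j : Fin n, ∑ s ∈ Finset.range (m/2),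
      dist (f (ε + s • e j)) (f (ε + (s+1) • e j)) ^ q)
      = ((m/2 : ℕ) : ℝ) * ∑ ε : Fin n → ZMod m, ∑ j : Fin n,
          dist (f ε) (f (ε + e j)) ^ q := by
    rw [Finset.sum_comm]
    have hinner : ∀ j : Fin n, (∑ ε : Fin n → ZMod m, ∑ s ∈ Finset.range (m/2),
        dist (f (ε + s • e j)) (f (ε + (s+1) • e j)) ^ q)
        = ((m/2 : ℕ) : ℝ) * ∑ ε : Fin n → ZMod m, dist (f ε) (f (ε + e j)) ^ q := by
      intro j
      rw [Finset.sum_comm]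
      have hs : ∀ s : ℕ, (∑ ε : Fin n → ZMod m,
          dist (f (ε + s • e j)) (f (ε + (s+1) • e j)) ^ q)
          = ∑ ε : Fin n → ZMod m, dist (f ε) (f (ε + e j)) ^ q := by
        intro s
        have h1 : ∀ ε : Fin n → ZMod m, ε + (s+1) • e j = (ε + s • e j) + e j := by
          intro ε; rw [succ_nsmul, ← add_assoc]
        calc (∑ ε : Fin n → ZMod m, dist (f (ε + s • e j)) (f (ε + (s+1) • e j)) ^ q)
            = ∑ ε : Fin n → ZMod m, dist (f (ε + s • e j)) (f ((ε + s • e j) + e j)) ^ q := by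
              exact Finset.sum_congr rfl fun ε _ => by rw [h1]
          _ = ∑ ε : Fin n → ZMod m, dist (f ε) (f (ε + e j)) ^ q := by
              simpa using Equiv.sum_comp (Equiv.addRight (s • e j))
                (fun ε => dist (f ε) (f (ε + e j)) ^ q)
      simp_rw [hs]
      rw [Finset.sum_const, Finset.card_range, nsmul_eq_mul]
    simp_rw [hinner]
    rw [← Finset.mul_sum, Finset.sum_comm]
  -- unit directions are among the δ-vectors
  have step3 : ∀ ε : Fin n → ZMod m, (∑ j : Fin n, dist (f ε) (f (ε + e j)) ^ q)
      ≤ ∑ δ : Fin n → Fin 3,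
          dist (f ε) (f (ε + fun i => (((δ i : ℤ) - 1 : ℤ) : ZMod m))) ^ q := by
    intro ε
    set ι : Fin n → (Fin n → Fin 3) := fun j i => if i = j then 2 else 1 with hι
    have hinj : Function.Injective ι := by
      intro a b hab
      by_contra hne
      have h := congrFun hab a
      simp only [hι, if_pos rfl] at h
      rw [if_neg (fun hh => hne hh)] at h
      exact absurd h (by decide)
    have hvec : ∀ j, (fun i => (((ι j i : ℤ) - 1 : ℤ) : ZMod m)) = e j := by
      intro j; funext i
      simp only [hι, he]
      split_ifs with h
      · norm_num
      · norm_num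
    calc (∑ j : Fin n, dist (f ε) (f (ε + e j)) ^ q)
        = ∑ j : Fin n, dist (f ε) (f (ε + fun i => (((ι j i : ℤ) - 1 : ℤ) : ZMod m))) ^ q :=
          Finset.sum_congr rfl fun j _ => by rw [hvec j]
      _ = ∑ δ ∈ Finset.univ.image ι,
            dist (f ε) (f (ε + fun i => (((δ i : ℤ) - 1 : ℤ) : ZMod m))) ^ q :=
          (Finset.sum_image
            (f := fun δ : Fin n → Fin 3 =>
              dist (f ε) (f (ε + fun i => (((δ i : ℤ) - 1 : ℤ) : ZMod m))) ^ q)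
            (g := ι) (fun a _ b _ h => hinj h)).symm
      _ ≤ ∑ δ : Fin n → Fin 3,
            dist (f ε) (f (ε + fun i => (((δ i : ℤ) - 1 : ℤ) : ZMod m))) ^ q :=
          Finset.sum_le_sum_of_subset_of_nonneg (Finset.subset_univ _)
            (fun _ _ _ => Real.rpow_nonneg dist_nonneg q)
  -- arithmetic on m
  have hmpos : (0:ℝ) < (m:ℝ) := by exact_mod_cast Nat.pos_of_ne_zero hm
  have hbase : (0:ℝ) ≤ (n:ℝ) * 3 ^ n := by positivity
  have h2 : (((n:ℝ) * 3 ^ n) ^ (1/(q-1))) ^ (q-1) = (n:ℝ) * 3 ^ n := by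
    rw [← Real.rpow_mul hbase, one_div_mul_cancel (by linarith : q - 1 ≠ 0), Real.rpow_one]
  have h3 : (3:ℝ) ^ n ≤ (m:ℝ) ^ (q-1) := by
    have hn1 : (1:ℝ) ≤ (n:ℝ) := by exact_mod_cast hn
    have h3p : (0:ℝ) < 3 ^ n := by positivity
    calc (3:ℝ) ^ n ≤ (n:ℝ) * 3 ^ n := by nlinarith
      _ = (((n:ℝ) * 3 ^ n) ^ (1/(q-1))) ^ (q-1) := h2.symm
      _ ≤ (m:ℝ) ^ (q-1) := Real.rpow_le_rpow (Real.rpow_nonneg hbase _) hmq (by linarith)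
  have hmq' : ((m/2 : ℕ) : ℝ) * 3 ^ n ≤ (m:ℝ) ^ q := by
    have hcast : ((m/2 : ℕ) : ℝ) ≤ (m:ℝ) := by exact_mod_cast Nat.div_le_self m 2
    have hmq2 : (m:ℝ) ^ q = (m:ℝ) * (m:ℝ) ^ (q-1) := by
      nth_rewrite 1 [show q = 1 + (q-1) by ring]
      rw [Real.rpow_add hmpos, Real.rpow_one]
    rw [hmq2]
    exact mul_le_mul hcast h3 (by positivity) hmpos.le
  -- put it all together
  have hT : (0:ℝ) < (3:ℝ) ^ n := by positivity
  have hM : (0:ℝ) < (m:ℝ) ^ n := by positivity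
  set S2 : ℝ := ∑ ε : Fin n → ZMod m, ∑ δ : Fin n → Fin 3,
      dist (f ε) (f (ε + fun i => (((δ i : ℤ) - 1 : ℤ) : ZMod m))) ^ q with hS2def
  have hS2 : 0 ≤ S2 := Finset.sum_nonneg fun _ _ => Finset.sum_nonneg
    fun _ _ => Real.rpow_nonneg dist_nonneg q
  have hfinal : (∑ ε : Fin n → ZMod m, ∑ j : Fin n,
      dist (f ε) (f (ε + fun i => if i = j then ((m / 2 : ℕ) : ZMod m) else 0)) ^ q)
      ≤ ((L^2) ^ q * (m:ℝ) ^ q / 3 ^ n) * S2 := by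
    have h4 : (∑ ε : Fin n → ZMod m, ∑ j : Fin n, dist (f ε) (f (ε + e j)) ^ q) ≤ S2 :=
      Finset.sum_le_sum fun ε _ => step3 ε
    have h5 : ((m/2 : ℕ) : ℝ) *
        (∑ ε : Fin n → ZMod m, ∑ j : Fin n, dist (f ε) (f (ε + e j)) ^ q)
        ≤ ((m:ℝ) ^ q / 3 ^ n) * S2 := by
      have h6 : ((m/2 : ℕ) : ℝ) ≤ (m:ℝ) ^ q / 3 ^ n := (le_div_iff₀ hT).mpr hmq'
      have h7 : 0 ≤ (∑ ε : Fin n → ZMod m, ∑ j : Fin n, dist (f ε) (f (ε + e j)) ^ q) :=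
        Finset.sum_nonneg fun _ _ => Finset.sum_nonneg
          fun _ _ => Real.rpow_nonneg dist_nonneg q
      calc ((m/2 : ℕ) : ℝ) * (∑ ε : Fin n → ZMod m, ∑ j : Fin n, dist (f ε) (f (ε + e j)) ^ q)
          ≤ ((m:ℝ) ^ q / 3 ^ n) * (∑ ε : Fin n → ZMod m, ∑ j : Fin n,
              dist (f ε) (f (ε + e j)) ^ q) := mul_le_mul_of_nonneg_right h6 h7
        _ ≤ ((m:ℝ) ^ q / 3 ^ n) * S2 := by
            refine mul_le_mul_of_nonneg_left h4 ?_
            positivity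
    calc (∑ ε : Fin n → ZMod m, ∑ j : Fin n,
        dist (f ε) (f (ε + fun i => if i = j then ((m / 2 : ℕ) : ZMod m) else 0)) ^ q)
        ≤ (L^2) ^ q * (((m/2 : ℕ) : ℝ) *
            ∑ ε : Fin n → ZMod m, ∑ j : Fin n, dist (f ε) (f (ε + e j)) ^ q) := by
          rw [← step2]; exact step1
      _ ≤ (L^2) ^ q * (((m:ℝ) ^ q / 3 ^ n) * S2) :=
          mul_le_mul_of_nonneg_left h5 (Real.rpow_nonneg hL2 q)
      _ = ((L^2) ^ q * (m:ℝ) ^ q / 3 ^ n) * S2 := by ring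
  show (∑ ε : Fin n → ZMod m, ∑ j : Fin n,
      dist (f ε) (f (ε + fun i => if i = j then ((m / 2 : ℕ) : ZMod m) else 0)) ^ q) / (m:ℝ) ^ n
      ≤ (L^2) ^ q * (m:ℝ) ^ q * (S2 / ((m:ℝ) ^ n * 3 ^ n))
  have heq : (L^2) ^ q * (m:ℝ) ^ q * (S2 / ((m:ℝ) ^ n * 3 ^ n))
      = (((L^2) ^ q * (m:ℝ) ^ q / 3 ^ n) * S2) / (m:ℝ) ^ n := by
    ring
  rw [heq]
  exact div_le_div_of_nonneg_right hfinal hM.le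

/-- **Theorem (spaces bi-Lipschitz equivalent to ultrametric spaces have metric cotype `q`
for all `q > 1`)**: if `(X,d)` is `L`-bi-Lipschitz equivalent to an ultrametric space `Y`
and `q > 1`, then there is `Γ ≥ 1` such that for every `n ≥ 1` and every even
`m ≥ (n 3^n)^{1/(q-1)}`, every `f : (ℤ/mℤ)^n → X` satisfies
`E_ε Σ_j d(f(ε),f_j(ε))^q ≤ Γ^q m^q E_ε E_δ d(f(ε),f_δ(ε))^q`.
In particular `X` supports a metric cotype `q` inequality. -/
theorem ultrametric_biLip_cotype {X Y : Type*} [MetricSpace X] [MetricSpace Y]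
    (hY : ∀ x y z : Y, dist x y ≤ max (dist x z) (dist z y))
    (L : ℝ) (hL : 1 ≤ L) (φ : Y ≃ X)
    (hφ : ∀ x y : Y, dist x y / L ≤ dist (φ x) (φ y) ∧ dist (φ x) (φ y) ≤ L * dist x y)
    (q : ℝ) (hq : 1 < q) :
    (∃ Γ : ℝ, 1 ≤ Γ ∧ ∀ n : ℕ, 1 ≤ n → ∀ m : ℕ, Even m →
      ((n : ℝ) * 3 ^ n) ^ (1 / (q - 1)) ≤ (m : ℝ) → ∀ hm : m ≠ 0,
      ∀ f : (Fin n → ZMod m) → X,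
        cotypeLHS q n m hm f ≤ Γ ^ q * (m : ℝ) ^ q * cotypeRHS q n m hm f) ∧
    SupportsCotype X q q := by
  have hΓ : (1:ℝ) ≤ L^2 := by nlinarith
  have hL2 : (0:ℝ) ≤ L^2 := by nlinarith
  refine ⟨⟨L^2, hΓ, fun n hn m hme hmq hm f =>
    main_ineq hY L hL φ hφ q hq n hn m hme hmq hm f⟩, ?_⟩
  have hqq : 1 - q/q = 0 := by rw [div_self (by linarith : q ≠ 0)]; ring
  refine ⟨L^2, hΓ, fun n => 2 * ⌈((n:ℝ) * 3^n) ^ (1/(q-1))⌉₊ + 2,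
    fun n => ⟨⟨⌈((n:ℝ) * 3^n) ^ (1/(q-1))⌉₊ + 1, by ring⟩, by positivity⟩, ?_⟩
  intro n f
  rw [hqq, Real.rpow_zero, mul_one]
  set M : ℕ := 2 * ⌈((n:ℝ) * 3^n) ^ (1/(q-1))⌉₊ + 2 with hMdef
  rcases Nat.eq_zero_or_pos n with h0 | h1
  · subst h0
    have hLHS0 : cotypeLHS q 0 M (by omega) f = 0 := by
      simp [cotypeLHS]
    rw [hLHS0]
    have hR : 0 ≤ cotypeRHS q 0 M (by omega) f := by
      refine div_nonneg (Finset.sum_nonneg fun _ _ => Finset.sum_nonneg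
        fun _ _ => Real.rpow_nonneg dist_nonneg q) (by positivity)
    have h1 : (0:ℝ) ≤ (L^2)^q := Real.rpow_nonneg hL2 q
    have h2 : (0:ℝ) ≤ (M:ℝ)^q := Real.rpow_nonneg (Nat.cast_nonneg M) q
    exact mul_nonneg (mul_nonneg h1 h2) hR
  · refine main_ineq hY L hL φ hφ q hq n h1 M
      ⟨⌈((n:ℝ) * 3^n) ^ (1/(q-1))⌉₊ + 1, by rw [hMdef]; ring⟩ ?_ (by omega) f
    have hceil := Nat.le_ceil (((n:ℝ) * 3^n) ^ (1/(q-1)))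
    have : ((⌈((n:ℝ) * 3^n) ^ (1/(q-1))⌉₊ : ℝ)) ≤ (M:ℝ) := by
      rw [hMdef]
      push_cast
      have : (0:ℝ) ≤ (⌈((n:ℝ) * 3^n) ^ (1/(q-1))⌉₊ : ℝ) := Nat.cast_nonneg _
      linarith
    linarith
end

section
/- If a metric space (X,d) is L-bi-Lipschitz equivalent to an ultrametric space for some L ≥ 1, then (X,d) has the 2L²-finite separation property. -/
/-- `(X,d)` has the `C`-finite separation property: every finite subset `S` with more than
one point admits a nonempty proper subset `A ⊊ S` with `dist(A, S \ A) ≥ diam(S)/C`. -/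
def FiniteSepProp (X : Type*) [PseudoMetricSpace X] (C : ℝ) : Prop :=
  ∀ S : Finset X, 1 < S.card → ∃ A : Finset X, A.Nonempty ∧ A ⊂ S ∧
    ∀ a ∈ A, ∀ b ∈ S, b ∉ A → Metric.diam (S : Set X) / C ≤ dist a b

/-- **If `(X,d)` is `L`-bi-Lipschitz equivalent to an ultrametric space, then it has the
`2L²`-finite separation property.** -/
theorem biLip_ultrametric_fsp {X Y : Type*} [MetricSpace X] [MetricSpace Y]
    (hY : ∀ x y z : Y, dist x y ≤ max (dist x z) (dist z y))
    (L : ℝ) (hL : 1 ≤ L) (φ : Y ≃ X)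
    (hφ : ∀ x y : Y, dist x y / L ≤ dist (φ x) (φ y) ∧ dist (φ x) (φ y) ≤ L * dist x y) :
    FiniteSepProp X (2 * L ^ 2) := by
  have hL0 : (0:ℝ) < L := lt_of_lt_of_le one_pos hL
  intro S hS
  classical
  -- transport S to Y
  set T : Finset Y := S.image φ.symm with hT
  have hTS : T.image φ = S := by
    rw [hT, Finset.image_image]
    simpa using Finset.image_id (s := S)
  have hTcard : T.card = S.card := Finset.card_image_of_injective _ φ.symm.injective
  have hTne : T.Nonempty := Finset.card_pos.mp (by omega)
  -- pair achieving max distance in T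
  obtain ⟨⟨y0, y1⟩, hmem, hmax⟩ :=
    (T ×ˢ T).exists_max_image (fun p => dist p.1 p.2) (hTne.product hTne)
  simp only [Finset.mem_product] at hmem
  obtain ⟨hy0T, hy1T⟩ := hmem
  set D : ℝ := dist y0 y1 with hD
  have hmax' : ∀ x ∈ T, ∀ y ∈ T, dist x y ≤ D := fun x hx y hy =>
    hmax (x, y) (Finset.mem_product.mpr ⟨hx, hy⟩)
  -- D > 0
  have hDpos : 0 < D := by
    obtain ⟨a, haT, b, hbT, hab⟩ := Finset.one_lt_card.mp (hTcard ▸ hS)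
    have := hmax' a haT b hbT
    have := dist_pos.mpr hab
    linarith
  -- define A
  set A' : Finset Y := T.filter (fun y => dist y y0 < D) with hA'
  refine ⟨A'.image φ, ?_, ?_, ?_⟩
  · refine ⟨φ y0, Finset.mem_image_of_mem φ ?_⟩
    rw [hA', Finset.mem_filter]
    exact ⟨hy0T, by simpa using hDpos⟩
  · constructor
    · intro x hx
      obtain ⟨y, hy, rfl⟩ := Finset.mem_image.mp hx
      rw [hA', Finset.mem_filter] at hy
      rw [← hTS]
      exact Finset.mem_image_of_mem φ hy.1
    · intro hsub
      have : φ y1 ∈ A'.image φ := by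
        apply hsub
        rw [← hTS]
        exact Finset.mem_image_of_mem φ hy1T
      obtain ⟨y, hy, hyeq⟩ := Finset.mem_image.mp this
      have heq : y = y1 := φ.injective hyeq
      rw [hA', Finset.mem_filter, heq] at hy
      have : dist y1 y0 = dist y0 y1 := dist_comm _ _
      linarith [hy.2]
  · intro a ha b hbS hbA
    obtain ⟨a', ha'A, rfl⟩ := Finset.mem_image.mp ha
    rw [hA', Finset.mem_filter] at ha'A
    obtain ⟨ha'T, ha'd⟩ := ha'A
    set b' : Y := φ.symm b with hb'
    have hb'T : b' ∈ T := Finset.mem_image_of_mem _ hbS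
    have hbeq : φ b' = b := φ.apply_symm_apply b
    have hb'A : dist b' y0 ≥ D := by
      by_contra h
      push_neg at h
      apply hbA
      rw [← hbeq]
      exact Finset.mem_image_of_mem φ (by rw [hA', Finset.mem_filter]; exact ⟨hb'T, h⟩)
    -- ultrametric step: dist a' b' ≥ D
    have hab' : D ≤ dist a' b' := by
      have := hY b' y0 a'
      rw [dist_comm a' y0] at this
      rcases le_max_iff.mp (le_trans hb'A this) with h | h
      · rwa [dist_comm] at h
      · rw [dist_comm y0 a'] at h
        linarith
    -- diam S ≤ L * D
    have hdiam : Metric.diam (S : Set X) ≤ L * D := by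
      apply Metric.diam_le_of_forall_dist_le (by positivity)
      intro x hx y hy
      have hx' : φ.symm x ∈ T := Finset.mem_image_of_mem _ hx
      have hy' : φ.symm y ∈ T := Finset.mem_image_of_mem _ hy
      calc dist x y = dist (φ (φ.symm x)) (φ (φ.symm y)) := by
            rw [φ.apply_symm_apply, φ.apply_symm_apply]
        _ ≤ L * dist (φ.symm x) (φ.symm y) := (hφ _ _).2
        _ ≤ L * D := by
            have := hmax' _ hx' _ hy'
            nlinarith
    have hkey : D / L ≤ dist (φ a') b := by
      rw [← hbeq]
      calc D / L ≤ dist a' b' / L := by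
            exact div_le_div_of_nonneg_right hab' hL0.le
        _ ≤ dist (φ a') (φ b') := (hφ _ _).1
    calc Metric.diam (S : Set X) / (2 * L ^ 2) ≤ (L * D) / (2 * L ^ 2) :=
          div_le_div_of_nonneg_right hdiam (by positivity)
      _ ≤ D / L := by
          rw [div_le_div_iff₀ (by positivity) hL0]
          nlinarith
      _ ≤ dist (φ a') b := hkey
end

section
/- Suppose a metric space (X,d) has the C-finite separation property for some C ≥ 1. Then there is an ultrametric ρ on the underlying set of X such that the identity map is C-bi-Lipschitz, i.e. d(x,y)/C ≤ ρ(x,y) ≤ C·d(x,y) for all x,y ∈ X. -/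
/-- `ρ` is a metric on the set `X`. -/
def IsMetricOn {X : Type*} (ρ : X → X → ℝ) : Prop :=
  (∀ x y, 0 ≤ ρ x y) ∧ (∀ x y, ρ x y = 0 ↔ x = y) ∧ (∀ x y, ρ x y = ρ y x) ∧
    ∀ x y z, ρ x z ≤ ρ x y + ρ y z

open Metric

namespace FSPaux

variable {X : Type*} [MetricSpace X]

def chainSet (x y : X) : Set ℝ :=
  {t | 0 ≤ t ∧ ∃ n, ∃ f : ℕ → X, f 0 = x ∧ f n = y ∧ ∀ i < n, dist (f i) (f (i+1)) ≤ t}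

noncomputable def rho (x y : X) : ℝ := sInf (chainSet x y)

lemma dist_mem_chainSet (x y : X) : dist x y ∈ chainSet x y := by
  refine ⟨dist_nonneg, 1, fun i => if i = 0 then x else y, by simp, by simp, ?_⟩
  intro i hi
  interval_cases i
  simp

lemma chainSet_nonempty (x y : X) : (chainSet x y).Nonempty := ⟨_, dist_mem_chainSet x y⟩

lemma chainSet_bddBelow (x y : X) : BddBelow (chainSet x y) := ⟨0, fun t ht => ht.1⟩

lemma chainSet_symm (x y : X) : chainSet x y = chainSet y x := by
  have main : ∀ u v : X, chainSet u v ⊆ chainSet v u := by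
    rintro u v t ⟨ht0, n, f, h0, hn, hstep⟩
    refine ⟨ht0, n, fun i => f (n - i), by simp [hn], by simp [h0], ?_⟩
    intro i hi
    show dist (f (n - i)) (f (n - (i+1))) ≤ t
    have h1 : n - i = (n - (i+1)) + 1 := by omega
    rw [h1, dist_comm]
    exact hstep _ (by omega)
  exact le_antisymm (main x y) (main y x)

lemma rho_nonneg (x y : X) : 0 ≤ rho x y :=
  Real.sInf_nonneg (fun t ht => ht.1)

lemma rho_le_dist (x y : X) : rho x y ≤ dist x y :=
  csInf_le (chainSet_bddBelow x y) (dist_mem_chainSet x y)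

lemma rho_symm (x y : X) : rho x y = rho y x := by
  unfold rho; rw [chainSet_symm]

lemma max_mem_chainSet {x z y : X} {t s : ℝ} (ht : t ∈ chainSet x z) (hs : s ∈ chainSet z y) :
    max t s ∈ chainSet x y := by
  obtain ⟨ht0, n, f, hf0, hfn, hfstep⟩ := ht
  obtain ⟨hs0, m, g, hg0, hgm, hgstep⟩ := hs
  refine ⟨le_trans ht0 (le_max_left _ _), n + m, fun i => if i ≤ n then f i else g (i - n), ?_, ?_, ?_⟩
  · simp [hf0]
  · have hg' : ∀ i, n ≤ i → (if i ≤ n then f i else g (i - n)) = g (i - n) := by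
      intro i hi
      rcases Nat.lt_or_ge n i with hlt | hge
      · simp [Nat.not_le.mpr hlt]
      · have : i = n := le_antisymm hge hi
        simp [this, hfn, hg0]
    show (if n + m ≤ n then f (n+m) else g (n + m - n)) = y
    rw [hg' _ (by omega)]
    simpa using hgm
  · intro i hi
    have hg' : ∀ j, n ≤ j → (if j ≤ n then f j else g (j - n)) = g (j - n) := by
      intro j hj
      rcases Nat.lt_or_ge n j with hlt | hge
      · simp [Nat.not_le.mpr hlt]
      · have : j = n := le_antisymm hge hj
        simp [this, hfn, hg0]
    show dist (if i ≤ n then f i else g (i - n)) (if i + 1 ≤ n then f (i+1) else g (i + 1 - n)) ≤ max t s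
    rcases Nat.lt_or_ge i n with hin | hin
    · have h1 : i ≤ n := le_of_lt hin
      have h2 : i + 1 ≤ n := hin
      simp only [h1, h2, if_pos]
      exact le_trans (hfstep i hin) (le_max_left _ _)
    · rw [hg' i hin, hg' (i+1) (by omega)]
      have : i + 1 - n = (i - n) + 1 := by omega
      rw [this]
      exact le_trans (hgstep (i - n) (by omega)) (le_max_right _ _)

lemma rho_ultra (x y z : X) : rho x y ≤ max (rho x z) (rho z y) := by
  refine le_of_forall_pos_le_add ?_
  intro ε hε
  obtain ⟨t, htmem, htlt⟩ := Real.lt_sInf_add_pos (chainSet_nonempty x z) hε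
  obtain ⟨s, hsmem, hslt⟩ := Real.lt_sInf_add_pos (chainSet_nonempty z y) hε
  have h1 : rho x y ≤ max t s := csInf_le (chainSet_bddBelow x y) (max_mem_chainSet htmem hsmem)
  have h2 : max t s ≤ max (rho x z) (rho z y) + ε := by
    rcases max_cases t s with ⟨he, _⟩ | ⟨he, _⟩ <;> rw [he]
    · exact le_trans htlt.le (by rw [rho]; gcongr; exact le_max_left _ _)
    · exact le_trans hslt.le (by rw [rho]; gcongr; exact le_max_right _ _)
  linarith

lemma key (C : ℝ) (hC : 1 ≤ C) (h : FiniteSepProp X C) {x y : X} {t : ℝ}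
    (ht : t ∈ chainSet x y) : dist x y ≤ C * t := by
  obtain ⟨ht0, n, f, hf0, hfn, hstep⟩ := ht
  classical
  by_contra hlt
  push_neg at hlt
  have hC0 : (0:ℝ) < C := lt_of_lt_of_le one_pos hC
  have hxy : x ≠ y := by
    intro e
    rw [e, dist_self] at hlt
    nlinarith
  set S := Finset.image f (Finset.range (n+1)) with hS
  have hxS : x ∈ S := by
    rw [hS]; exact Finset.mem_image.mpr ⟨0, Finset.mem_range.mpr (by omega), hf0⟩
  have hyS : y ∈ S := by
    rw [hS]; exact Finset.mem_image.mpr ⟨n, Finset.mem_range.mpr (by omega), hfn⟩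
  have hcard : 1 < S.card := Finset.one_lt_card.mpr ⟨x, hxS, y, hyS, hxy⟩
  obtain ⟨A, hAne, hAsub, hA⟩ := h S hcard
  have hbd : Bornology.IsBounded (S : Set X) := S.finite_toSet.isBounded
  have hdiam : dist x y ≤ diam (S : Set X) := dist_le_diam_of_mem hbd hxS hyS
  have hts : t < diam (S : Set X) / C := by
    rw [lt_div_iff₀ hC0]
    nlinarith
  have hfS : ∀ i, i ≤ n → f i ∈ S := by
    intro i hi
    exact Finset.mem_image.mpr ⟨i, Finset.mem_range.mpr (by omega), rfl⟩
  have same : ∀ i, i ≤ n → (f i ∈ A ↔ f 0 ∈ A) := by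
    intro i
    induction i with
    | zero => simp
    | succ k ih =>
      intro hk
      have hk' : k ≤ n := by omega
      have hstepk := hstep k (by omega)
      have hiff : (f (k+1) ∈ A ↔ f k ∈ A) := by
        constructor
        · intro hmem
          by_contra hnot
          have := hA _ hmem _ (hfS k hk') hnot
          rw [dist_comm] at this
          linarith
        · intro hmem
          by_contra hnot
          have := hA _ hmem _ (hfS (k+1) hk) hnot
          linarith
      rw [hiff]
      exact ih hk'
  obtain ⟨a, ha⟩ := hAne
  have haS : a ∈ S := hAsub.subset ha
  obtain ⟨j, hj, hja⟩ := Finset.mem_image.mp haS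
  obtain ⟨b, hbS, hbA⟩ := Finset.exists_of_ssubset hAsub
  obtain ⟨k, hk, hkb⟩ := Finset.mem_image.mp hbS
  have h0A : f 0 ∈ A := by
    have := (same j (by simpa using Nat.lt_succ_iff.mp (Finset.mem_range.mp hj))).mp (hja ▸ ha)
    exact this
  have : f k ∈ A := (same k (Nat.lt_succ_iff.mp (Finset.mem_range.mp hk))).mpr h0A
  exact hbA (hkb ▸ this)

end FSPaux

/-- **If `(X,d)` has the `C`-finite separation property, then there is an ultrametric `ρ`
on `X` with `d(x,y)/C ≤ ρ(x,y) ≤ C·d(x,y)` for all `x,y` (i.e. the identity map is a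
`C`-bi-Lipschitz equivalence with an ultrametric space).** -/
theorem fsp_biLip_ultrametric {X : Type*} [MetricSpace X]
    (C : ℝ) (hC : 1 ≤ C) (h : FiniteSepProp X C) :
    ∃ ρ : X → X → ℝ, IsMetricOn ρ ∧
      (∀ x y z : X, ρ x y ≤ max (ρ x z) (ρ z y)) ∧
      ∀ x y : X, dist x y / C ≤ ρ x y ∧ ρ x y ≤ C * dist x y := by
  have hC0 : (0:ℝ) < C := lt_of_lt_of_le one_pos hC
  refine ⟨FSPaux.rho, ⟨FSPaux.rho_nonneg, ?_, FSPaux.rho_symm, ?_⟩, ?_, ?_⟩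
  · intro x y
    constructor
    · intro h0
      have h1 : dist x y / C ≤ FSPaux.rho x y := by
        refine le_csInf (FSPaux.chainSet_nonempty x y) ?_
        intro t ht
        rw [div_le_iff₀ hC0]
        calc dist x y ≤ C * t := FSPaux.key C hC h ht
          _ = t * C := mul_comm _ _
      rw [h0] at h1
      have : dist x y ≤ 0 := by
        rw [div_le_iff₀ hC0] at h1; simpa using h1
      exact dist_le_zero.mp this
    · intro he
      subst he
      have h1 := FSPaux.rho_le_dist x x
      have h2 := FSPaux.rho_nonneg x x
      rw [dist_self] at h1
      linarith
  · intro x y z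
    calc FSPaux.rho x z ≤ max (FSPaux.rho x y) (FSPaux.rho y z) := FSPaux.rho_ultra x z y
      _ ≤ FSPaux.rho x y + FSPaux.rho y z :=
        max_le (le_add_of_nonneg_right (FSPaux.rho_nonneg _ _))
          (le_add_of_nonneg_left (FSPaux.rho_nonneg _ _))
  · exact fun x y z => FSPaux.rho_ultra x y z
  · intro x y
    constructor
    · refine le_csInf (FSPaux.chainSet_nonempty x y) ?_
      intro t ht
      rw [div_le_iff₀ hC0]
      calc dist x y ≤ C * t := FSPaux.key C hC h ht
        _ = t * C := mul_comm _ _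
    · calc FSPaux.rho x y ≤ dist x y := FSPaux.rho_le_dist x y
        _ ≤ C * dist x y := le_mul_of_one_le_left dist_nonneg hC
end

section
/- Let C ≥ 1 and let (X,d) be a finite metric space. Then (X,d) supports a C-separated tree structure if and only if (X,d) has the C-finite separation property. -/
open scoped Classical


/-- A `C`-separated tree structure on a metric space `X`: a family of subsets indexed by
finite 0-1 sequences (`List Bool`, with `α ⌢ δ = α ++ [δ]` and "ancestor" = list prefix)
such that (1) the root is `X`; (2) any two distinct points are separated by two
incomparable indices; (3) each set is the union of its two children; (4) children of a
set with more than one point are nonempty; (5) `diam A_α ≤ C · dist(A_{α⌢0}, A_{α⌢1})`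
whenever `A_α` has more than one point (expressed pointwise). -/
structure SepTreeStructure (X : Type*) [PseudoMetricSpace X] (C : ℝ)
    (A : List Bool → Set X) : Prop where
  root : A [] = Set.univ
  separates : ∀ x y : X, x ≠ y → ∃ α β : List Bool,
    ¬ α <+: β ∧ ¬ β <+: α ∧ x ∈ A α ∧ y ∈ A β
  partition : ∀ α : List Bool, A α = A (α ++ [false]) ∪ A (α ++ [true])
  children_nonempty : ∀ α : List Bool, (A α).Nontrivial →
    (A (α ++ [false])).Nonempty ∧ (A (α ++ [true])).Nonempty
  gap : ∀ α : List Bool, (A α).Nontrivial →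
    ∀ a ∈ A (α ++ [false]), ∀ b ∈ A (α ++ [true]),
      Metric.diam (A α) ≤ C * dist a b

/-- The tree of finsets built from the finite separation property.  The list is read
with the most recent split at the head (i.e. it corresponds to a reversed index). -/
noncomputable def treeSets {X : Type*} [PseudoMetricSpace X] {C : ℝ}
    (h : FiniteSepProp X C) [Fintype X] : List Bool → Finset X
  | [] => Finset.univ
  | b :: β =>
      let S := treeSets h β
      if hc : 1 < S.card then
        if b then S \ (h S hc).choose else (h S hc).choose
      else S

lemma treeSets_cons_false {X : Type*} [PseudoMetricSpace X] [Fintype X] {C : ℝ}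
    (h : FiniteSepProp X C) (β : List Bool) (hc : 1 < (treeSets h β).card) :
    treeSets h (false :: β) = (h (treeSets h β) hc).choose := by
  simp [treeSets, hc]

lemma treeSets_cons_true {X : Type*} [PseudoMetricSpace X] [Fintype X] {C : ℝ}
    (h : FiniteSepProp X C) (β : List Bool) (hc : 1 < (treeSets h β).card) :
    treeSets h (true :: β) = treeSets h β \ (h (treeSets h β) hc).choose := by
  simp [treeSets, hc]

lemma treeSets_cons_small {X : Type*} [PseudoMetricSpace X] [Fintype X] {C : ℝ}
    (h : FiniteSepProp X C) (β : List Bool) (b : Bool)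
    (hc : ¬ 1 < (treeSets h β).card) :
    treeSets h (b :: β) = treeSets h β := by
  simp [treeSets, hc]

lemma treeSets_sep_aux {X : Type*} [MetricSpace X] [Fintype X] {C : ℝ}
    (h : FiniteSepProp X C) :
    ∀ n : ℕ, ∀ β : List Bool, (treeSets h β).card ≤ n →
      ∀ x y : X, x ∈ treeSets h β → y ∈ treeSets h β → x ≠ y →
      ∃ γ : List Bool, ∃ b : Bool,
        x ∈ treeSets h (b :: γ) ∧ y ∈ treeSets h ((!b) :: γ) := by
  intro n
  induction n with
  | zero =>
      intro β hcard x y hx hy hxy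
      exact absurd (Finset.card_pos.mpr ⟨x, hx⟩) (by omega)
  | succ n ih =>
      intro β hcard x y hx hy hxy
      set S := treeSets h β with hS
      have hc : 1 < S.card := Finset.one_lt_card.mpr ⟨x, hx, y, hy, hxy⟩
      obtain ⟨hne, hss, -⟩ := (h S hc).choose_spec
      set T := (h S hc).choose with hT
      have hfalse : treeSets h (false :: β) = T := treeSets_cons_false h β hc
      have htrue : treeSets h (true :: β) = S \ T := treeSets_cons_true h β hc
      have hTS : T ⊆ S := hss.subset
      have hcardT : T.card < S.card := Finset.card_lt_card hss
      have hcardD : (S \ T).card < S.card := by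
        obtain ⟨t, ht⟩ := hne
        have : t ∉ S \ T := by simp [ht]
        have hsub : S \ T ⊂ S := ⟨Finset.sdiff_subset, fun hsub => this (hsub (hTS ht))⟩
        exact Finset.card_lt_card hsub
      by_cases hxT : x ∈ T
      · by_cases hyT : y ∈ T
        · obtain ⟨γ, b, h1, h2⟩ := ih (false :: β) (by rw [hfalse]; omega) x y
            (by rw [hfalse]; exact hxT) (by rw [hfalse]; exact hyT) hxy
          exact ⟨γ, b, h1, h2⟩
        · exact ⟨β, false, by rw [hfalse]; exact hxT,
            by rw [show (!false) = true from rfl, htrue]; exact Finset.mem_sdiff.mpr ⟨hy, hyT⟩⟩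
      · by_cases hyT : y ∈ T
        · exact ⟨β, true, by rw [htrue]; exact Finset.mem_sdiff.mpr ⟨hx, hxT⟩,
            by rw [show (!true) = false from rfl, hfalse]; exact hyT⟩
        · obtain ⟨γ, b, h1, h2⟩ := ih (true :: β) (by rw [htrue]; omega) x y
            (by rw [htrue]; exact Finset.mem_sdiff.mpr ⟨hx, hxT⟩)
            (by rw [htrue]; exact Finset.mem_sdiff.mpr ⟨hy, hyT⟩) hxy
          exact ⟨γ, b, h1, h2⟩

lemma prefix_incomp {σ : List Bool} {b : Bool} :
    ¬ (σ ++ [b]) <+: (σ ++ [!b]) := by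
  intro hp
  have := hp.eq_of_length (by simp)
  simp at this

/-- **A finite metric space supports a `C`-separated tree structure if and only if it has
the `C`-finite separation property.** -/
theorem finite_sepTree_iff_fsp {X : Type*} [MetricSpace X] [Fintype X]
    (C : ℝ) (hC : 1 ≤ C) :
    (∃ A : List Bool → Set X, SepTreeStructure X C A) ↔ FiniteSepProp X C := by
  classical
  have hC0 : (0 : ℝ) < C := lt_of_lt_of_le one_pos hC
  constructor
  · rintro ⟨A, hA⟩
    intro S hS
    -- children of a nontrivial node are disjoint
    have hdisj : ∀ α : List Bool, (A α).Nontrivial →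
        ∀ z : X, z ∈ A (α ++ [false]) → z ∉ A (α ++ [true]) := by
      intro α hnt z hz0 hz1
      have hgap := hA.gap α hnt z hz0 z hz1
      simp only [dist_self, mul_zero] at hgap
      obtain ⟨u, hu, v, hv, huv⟩ := hnt
      have hb : Bornology.IsBounded (A α) := (Set.toFinite _).isBounded
      have hd : 0 < dist u v := dist_pos.mpr huv
      have := Metric.dist_le_diam_of_mem hb hu hv
      linarith
    -- descent lemma
    have descend : ∀ n : ℕ, ∀ α : List Bool, (A α).ncard ≤ n → (↑S : Set X) ⊆ A α →
        ∃ B : Finset X, B.Nonempty ∧ B ⊂ S ∧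
          ∀ a ∈ B, ∀ b ∈ S, b ∉ B → Metric.diam (S : Set X) / C ≤ dist a b := by
      intro n
      induction n with
      | zero =>
          intro α hn hsub
          obtain ⟨x, hx, -⟩ := Finset.one_lt_card.mp hS
          have : (A α).ncard ≠ 0 :=
            Set.ncard_ne_zero_of_mem (hsub hx) (Set.toFinite _)
          omega
      | succ n ih =>
          intro α hn hsub
          obtain ⟨x, hx, y, hy, hxy⟩ := Finset.one_lt_card.mp hS
          have hnt : (A α).Nontrivial := ⟨x, hsub hx, y, hsub hy, hxy⟩
          obtain ⟨hne0, hne1⟩ := hA.children_nonempty α hnt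
          have hpart := hA.partition α
          have hsub0 : A (α ++ [false]) ⊆ A α := hpart ▸ Set.subset_union_left
          have hsub1 : A (α ++ [true]) ⊆ A α := hpart ▸ Set.subset_union_right
          have hss0 : A (α ++ [false]) ⊂ A α := by
            obtain ⟨t, ht⟩ := hne1
            exact ⟨hsub0, fun hle => hdisj α hnt t (hle (hsub1 ht)) ht⟩
          have hss1 : A (α ++ [true]) ⊂ A α := by
            obtain ⟨t, ht⟩ := hne0
            exact ⟨hsub1, fun hle => hdisj α hnt t ht (hle (hsub0 ht))⟩
          by_cases hS0 : (↑S : Set X) ⊆ A (α ++ [false])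
          · exact ih (α ++ [false])
              (by have := Set.ncard_lt_ncard hss0 (Set.toFinite _); omega) hS0
          by_cases hS1 : (↑S : Set X) ⊆ A (α ++ [true])
          · exact ih (α ++ [true])
              (by have := Set.ncard_lt_ncard hss1 (Set.toFinite _); omega) hS1
          · obtain ⟨u, hu, hu0⟩ := Set.not_subset.mp hS0
            obtain ⟨v, hv, hv1⟩ := Set.not_subset.mp hS1
            refine ⟨S.filter (fun z => z ∈ A (α ++ [false])), ?_, ?_, ?_⟩
            · refine ⟨v, Finset.mem_filter.mpr ⟨by exact_mod_cast hv, ?_⟩⟩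
              have : v ∈ A α := hsub hv
              rw [hpart] at this
              rcases this with h | h
              · exact h
              · exact absurd h hv1
            · refine ⟨Finset.filter_subset _ _, fun hle => ?_⟩
              have := hle (by exact_mod_cast hu)
              exact hu0 (Finset.mem_filter.mp this).2
            · intro a ha b hb hbn
              have ha0 : a ∈ A (α ++ [false]) := (Finset.mem_filter.mp ha).2
              have hb1 : b ∈ A (α ++ [true]) := by
                have : b ∈ A α := hsub (by exact_mod_cast hb)
                rw [hpart] at this
                rcases this with h | h
                · exact absurd (Finset.mem_filter.mpr ⟨hb, h⟩) hbn
                · exact h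
              have hgap := hA.gap α hnt a ha0 b hb1
              have hmono : Metric.diam (↑S : Set X) ≤ Metric.diam (A α) :=
                Metric.diam_mono hsub (Set.toFinite _).isBounded
              rw [div_le_iff₀ hC0]
              calc Metric.diam (↑S : Set X) ≤ Metric.diam (A α) := hmono
                _ ≤ C * dist a b := hgap
                _ = dist a b * C := mul_comm _ _
    exact descend (A []).ncard [] le_rfl (by rw [hA.root]; exact Set.subset_univ _)
  · intro h
    refine ⟨fun α => ↑(treeSets h α.reverse), ?_, ?_, ?_, ?_, ?_⟩
    · simp [treeSets]
    · intro x y hxy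
      obtain ⟨γ, b, h1, h2⟩ := treeSets_sep_aux h (treeSets h []).card [] le_rfl x y
        (by simp [treeSets]) (by simp [treeSets]) hxy
      refine ⟨γ.reverse ++ [b], γ.reverse ++ [!b], prefix_incomp, ?_, ?_, ?_⟩
      · have := @prefix_incomp γ.reverse (!b)
        simp only [Bool.not_not] at this
        exact this
      · simpa using h1
      · simpa using h2
    · intro α
      have : (α ++ [false]).reverse = false :: α.reverse := by simp
      have h2 : (α ++ [true]).reverse = true :: α.reverse := by simp
      rw [this, h2]
      by_cases hc : 1 < (treeSets h α.reverse).card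
      · obtain ⟨hne, hss, -⟩ := (h (treeSets h α.reverse) hc).choose_spec
        rw [treeSets_cons_false h _ hc, treeSets_cons_true h _ hc,
          ← Finset.coe_union, Finset.union_sdiff_of_subset hss.subset]
      · rw [treeSets_cons_small h _ false hc, treeSets_cons_small h _ true hc,
          Set.union_self]
    · intro α hnt
      have hc : 1 < (treeSets h α.reverse).card := by
        obtain ⟨u, hu, v, hv, huv⟩ := hnt
        exact Finset.one_lt_card.mpr ⟨u, by exact_mod_cast hu, v, by exact_mod_cast hv, huv⟩
      obtain ⟨hne, hss, -⟩ := (h (treeSets h α.reverse) hc).choose_spec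
      constructor
      · have : (α ++ [false]).reverse = false :: α.reverse := by simp
        rw [this]
        rw [treeSets_cons_false h _ hc]
        exact_mod_cast hne
      · have : (α ++ [true]).reverse = true :: α.reverse := by simp
        rw [this]
        rw [treeSets_cons_true h _ hc]
        obtain ⟨t, ht⟩ := Finset.exists_of_ssubset hss
        exact ⟨t, by simpa using Finset.mem_sdiff.mpr ⟨ht.1, ht.2⟩⟩
    · intro α hnt a ha b hb
      have hc : 1 < (treeSets h α.reverse).card := by
        obtain ⟨u, hu, v, hv, huv⟩ := hnt
        exact Finset.one_lt_card.mpr ⟨u, by exact_mod_cast hu, v, by exact_mod_cast hv, huv⟩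
      obtain ⟨hne, hss, hgap⟩ := (h (treeSets h α.reverse) hc).choose_spec
      have ha' : a ∈ (h (treeSets h α.reverse) hc).choose := by
        have e : (α ++ [false]).reverse = false :: α.reverse := by simp
        rw [e, treeSets_cons_false h _ hc] at ha
        exact_mod_cast ha
      have hb' : b ∈ treeSets h α.reverse \ (h (treeSets h α.reverse) hc).choose := by
        have e : (α ++ [true]).reverse = true :: α.reverse := by simp
        rw [e, treeSets_cons_true h _ hc] at hb
        exact_mod_cast hb
      obtain ⟨hbS, hbn⟩ := Finset.mem_sdiff.mp hb'
      have := hgap a ha' b hbS hbn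
      rw [div_le_iff₀ hC0] at this
      calc Metric.diam (↑(treeSets h α.reverse) : Set X) ≤ dist a b * C := this
        _ = C * dist a b := mul_comm _ _
end

section
/- Let (X,d) be a metric space. Then there exists L ≥ 1 such that (X,d) is L-bi-Lipschitz equivalent to an ultrametric space if and only if there exists C ≥ 1 such that every finite subspace of (X,d) supports a C-separated tree structure. -/
/-!
If `ρ` is an ultrametric `L`-bi-Lipschitz to `d`, split a finite set at a `ρ`-diameter pair
`p, q` into the points `ρ`-closer to `p` than `q` is and the rest: by the ultrametric inequality
every distance across the split is at least `ρ p q`, so splitting recursively gives an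
`L²`-separated tree structure.

Conversely, let `u x y` be the infimum of the `r` such that `x` and `y` are joined by a chain of
steps of length at most `r`; this is an ultrametric with `u ≤ d`. Such a chain lies in a finite
set, in whose tree structure `x` lies in a child `A (γ ++ [c])` of a node containing `y` while `y`
does not, so the chain leaves that child at some step `p → q`. Then `q` lies in the sibling of
some ancestor of `A (γ ++ [c])`, and the gap condition there gives `d x y ≤ C d p q ≤ C r`.
Hence `d / C ≤ u ≤ d`.
-/

open Relation Metric

theorem List.exists_append_singleton_prefixes {α : Type*} :
    ∀ {μ ν : List α}, ¬ μ <+: ν → ¬ ν <+: μ →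
      ∃ γ a b, a ≠ b ∧ γ ++ [a] <+: μ ∧ γ ++ [b] <+: ν
  | [], _, h, _ => absurd List.nil_prefix h
  | _, [], _, h => absurd List.nil_prefix h
  | m :: μ, v :: ν, h₁, h₂ => by
    by_cases hmv : m = v
    · subst hmv
      obtain ⟨γ, a, b, hab, ha, hb⟩ := exists_append_singleton_prefixes (μ := μ) (ν := ν)
        (fun h => h₁ (List.cons_prefix_cons.2 ⟨rfl, h⟩))
        (fun h => h₂ (List.cons_prefix_cons.2 ⟨rfl, h⟩))
      exact ⟨m :: γ, a, b, hab, List.cons_prefix_cons.2 ⟨rfl, ha⟩,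
        List.cons_prefix_cons.2 ⟨rfl, hb⟩⟩
    · exact ⟨[], m, v, hmv, by simp, by simp⟩

theorem Relation.ReflTransGen.exists_mem_not_mem {α : Type*} {r : α → α → Prop} {s : Set α}
    {a b : α} (hab : ReflTransGen r a b) (ha : a ∈ s) (hb : b ∉ s) :
    ∃ p q, r p q ∧ p ∈ s ∧ q ∉ s := by
  induction hab with
  | refl => exact absurd ha hb
  | @tail c d _ hcd ih =>
    by_cases hc : c ∈ s
    · exact ⟨c, d, hcd, hc, hb⟩
    · exact ih hc

theorem Relation.ReflTransGen.exists_finset {α : Type*} {r : α → α → Prop} {a b : α}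
    (hab : ReflTransGen r a b) :
    ∃ (S : Finset α) (ha : a ∈ S) (hb : b ∈ S),
      ReflTransGen (fun x y : S => r x y) ⟨a, ha⟩ ⟨b, hb⟩ := by
  classical
  induction hab with
  | refl => exact ⟨{a}, Finset.mem_singleton_self a, Finset.mem_singleton_self a, .refl⟩
  | @tail c d _ hcd ih =>
    obtain ⟨S, ha, hc, hS⟩ := ih
    let incl : S → (insert d S : Finset α) := fun x => ⟨x, Finset.mem_insert_of_mem x.2⟩
    have hS' : ReflTransGen (fun x y : (insert d S : Finset α) => r x y)
        (incl ⟨a, ha⟩) (incl ⟨c, hc⟩) := ReflTransGen.lift incl (fun _ _ h => h) _ _ hS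
    exact ⟨insert d S, Finset.mem_insert_of_mem ha, Finset.mem_insert_self d S, hS'.tail hcd⟩

theorem Metric.disjoint_of_diam_le_mul_dist {Y : Type*} [MetricSpace Y] {C : ℝ} {T U V : Set Y}
    (hT : T.Nontrivial) (hb : Bornology.IsBounded T)
    (h : ∀ a ∈ U, ∀ b ∈ V, diam T ≤ C * dist a b) : Disjoint U V :=
  Set.disjoint_left.2 fun z hzU hzV =>
    (diam_pos hT hb).not_ge (by simpa using h z hzU z hzV)

theorem Metric.ssubset_of_diam_le_mul_dist {Y : Type*} [MetricSpace Y] {C : ℝ} {T U V : Set Y}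
    (hT : T.Nontrivial) (hb : Bornology.IsBounded T) (hUV : U ∪ V = T) (hV : V.Nonempty)
    (h : ∀ a ∈ U, ∀ b ∈ V, diam T ≤ C * dist a b) : U ⊂ T := by
  subst hUV
  obtain ⟨z, hz⟩ := hV
  exact (Set.ssubset_iff_of_subset Set.subset_union_left).2
    ⟨z, Or.inr hz, fun hzU => Set.disjoint_left.1 (disjoint_of_diam_le_mul_dist hT hb h) hzU hz⟩

namespace SepTreeStructure

section Basic

variable {Y : Type*} [PseudoMetricSpace Y] {C : ℝ} {A : List Bool → Set Y}

theorem child_subset (h : SepTreeStructure Y C A) (α : List Bool) (e : Bool) :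
    A (α ++ [e]) ⊆ A α := by
  rw [h.partition α]
  cases e
  · exact Set.subset_union_left
  · exact Set.subset_union_right

theorem subset_of_prefix (h : SepTreeStructure Y C A) {α β : List Bool} (hαβ : α <+: β) :
    A β ⊆ A α := by
  obtain ⟨t, rfl⟩ := hαβ
  induction t using List.reverseRecOn with
  | nil => simp
  | append_singleton t e ih =>
    rw [← List.append_assoc]
    exact (h.child_subset _ e).trans ih

theorem exists_exit (h : SepTreeStructure Y C A) {q : Y} {δ : List Bool} (hq : q ∉ A δ) :
    ∃ τ e, τ ++ [e] <+: δ ∧ q ∈ A τ ∧ q ∉ A (τ ++ [e]) := by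
  induction δ using List.reverseRecOn with
  | nil => simp [h.root] at hq
  | append_singleton δ e ih =>
    by_cases hqδ : q ∈ A δ
    · exact ⟨δ, e, List.prefix_rfl, hqδ, hq⟩
    · obtain ⟨τ, e', hτ, hqτ, hqe⟩ := ih hqδ
      exact ⟨τ, e', hτ.trans (List.prefix_append _ _), hqτ, hqe⟩

theorem diam_le_of_mem_siblings (h : SepTreeStructure Y C A) {α : List Bool} {a b : Bool}
    (hab : a ≠ b) (hα : (A α).Nontrivial) {x y : Y} (hx : x ∈ A (α ++ [a]))
    (hy : y ∈ A (α ++ [b])) : diam (A α) ≤ C * dist x y := by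
  cases a <;> cases b
  · exact absurd rfl hab
  · exact h.gap α hα x hx y hy
  · rw [dist_comm]
    exact h.gap α hα y hy x hx
  · exact absurd rfl hab

end Basic

section Finite

variable {Y : Type*} [MetricSpace Y] [Finite Y] {C : ℝ} {A : List Bool → Set Y}

theorem disjoint_siblings (h : SepTreeStructure Y C A) {α : List Bool} {a b : Bool}
    (hab : a ≠ b) (hα : (A α).Nontrivial) : Disjoint (A (α ++ [a])) (A (α ++ [b])) :=
  disjoint_of_diam_le_mul_dist hα (Set.toFinite _).isBounded fun _ hx _ hy =>
    h.diam_le_of_mem_siblings hab hα hx hy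

theorem exists_split (h : SepTreeStructure Y C A) {x y : Y} (hxy : x ≠ y) :
    ∃ γ e, x ∈ A (γ ++ [e]) ∧ y ∈ A γ ∧ y ∉ A (γ ++ [e]) := by
  obtain ⟨μ, ν, hμν, hνμ, hx, hy⟩ := h.separates x y hxy
  obtain ⟨γ, a, b, hab, hγμ, hγν⟩ := List.exists_append_singleton_prefixes hμν hνμ
  have hxa := h.subset_of_prefix hγμ hx
  have hyb := h.subset_of_prefix hγν hy
  have hγ : (A γ).Nontrivial := ⟨x, h.child_subset γ a hxa, y, h.child_subset γ b hyb, hxy⟩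
  exact ⟨γ, a, hxa, h.child_subset γ b hyb,
    fun hya => Set.disjoint_left.1 (h.disjoint_siblings hab hγ) hya hyb⟩

theorem dist_le_mul_dist_of_exit (h : SepTreeStructure Y C A) {τ : List Bool} {e : Bool}
    {x y p q : Y} (hx : x ∈ A τ) (hy : y ∈ A τ) (hp : p ∈ A (τ ++ [e])) (hq : q ∈ A τ)
    (hqe : q ∉ A (τ ++ [e])) : dist x y ≤ C * dist p q := by
  have hq' : q ∈ A (τ ++ [!e]) := by
    rw [h.partition τ] at hq
    cases e <;> simpa [hqe] using hq
  have hτ : (A τ).Nontrivial :=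
    ⟨p, h.child_subset τ e hp, q, hq, fun hpq => hqe (hpq ▸ hp)⟩
  calc dist x y ≤ diam (A τ) := dist_le_diam_of_mem (Set.toFinite _).isBounded hx hy
    _ ≤ C * dist p q := h.diam_le_of_mem_siblings (by simp) hτ hp hq'

theorem dist_le_mul_of_reflTransGen (h : SepTreeStructure Y C A) (hC : 0 ≤ C) {r : ℝ}
    (hr : 0 ≤ r) {x y : Y} (hxy : ReflTransGen (fun a b => dist a b ≤ r) x y) :
    dist x y ≤ C * r := by
  rcases eq_or_ne x y with rfl | hne
  · simpa using mul_nonneg hC hr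
  obtain ⟨γ, e, hx, hy, hye⟩ := h.exists_split hne
  obtain ⟨p, q, hpq, hp, hq⟩ := hxy.exists_mem_not_mem hx hye
  obtain ⟨τ, e', hτ, hqτ, hqe⟩ := h.exists_exit hq
  have hτγ : A γ ⊆ A τ := h.subset_of_prefix <|
    List.prefix_of_prefix_length_le ((List.prefix_append τ [e']).trans hτ)
      (List.prefix_append γ [e]) (by simpa using hτ.length_le)
  calc dist x y ≤ C * dist p q := h.dist_le_mul_dist_of_exit (hτγ (h.child_subset γ e hx))
        (hτγ hy) (h.subset_of_prefix hτ hp) hqτ hqe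
    _ ≤ C * r := by gcongr

theorem of_split (split : Set Y → Bool → Set Y)
    (hunion : ∀ T, split T false ∪ split T true = T)
    (hne : ∀ T, T.Nontrivial → ∀ e, (split T e).Nonempty)
    (hgap : ∀ T, T.Nontrivial → ∀ a ∈ split T false, ∀ b ∈ split T true,
      diam T ≤ C * dist a b) :
    SepTreeStructure Y C (fun α => α.foldl split Set.univ) := by
  set A : List Bool → Set Y := fun α => α.foldl split Set.univ
  have hA : ∀ α e, A (α ++ [e]) = split (A α) e := by simp [A]
  have hmem : ∀ T, ∀ z ∈ T, ∃ e, z ∈ split T e := by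
    intro T z hz
    rw [← hunion T] at hz
    exact hz.elim (⟨false, ·⟩) (⟨true, ·⟩)
  have hlt : ∀ T, T.Nontrivial → ∀ e, split T e < T := by
    intro T hT e
    have hT' := (Set.toFinite T).isBounded
    cases e
    · exact ssubset_of_diam_le_mul_dist hT hT' (hunion T) (hne T hT true) (hgap T hT)
    · refine ssubset_of_diam_le_mul_dist (C := C) hT hT' ((Set.union_comm _ _).trans (hunion T))
        (hne T hT false) fun b hb a ha => ?_
      rw [dist_comm]
      exact hgap T hT a ha b hb
  refine ⟨rfl, fun x y hxy => ?_, fun α => by rw [hA, hA, hunion],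
    fun α hα => by simpa only [hA] using ⟨hne _ hα false, hne _ hα true⟩,
    fun α hα => by simpa only [hA] using hgap _ hα⟩
  suffices ∀ T α, A α = T → x ∈ T → y ∈ T →
      ∃ μ ν, ¬ μ <+: ν ∧ ¬ ν <+: μ ∧ x ∈ A μ ∧ y ∈ A ν from
    this _ [] rfl (Set.mem_univ x) (Set.mem_univ y)
  -- Children of a nontrivial node are proper subsets, and `⊂` is well founded on `Set Y`.
  intro T
  induction T using WellFoundedLT.induction with
  | _ T ih =>
    rintro α rfl hx hy
    have hα : (A α).Nontrivial := ⟨x, hx, y, hy, hxy⟩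
    obtain ⟨a, hxa⟩ := hmem _ x hx
    obtain ⟨b, hyb⟩ := hmem _ y hy
    by_cases hab : a = b
    · subst hab
      exact ih _ (hlt _ hα a) (α ++ [a]) (hA α a) hxa hyb
    · exact ⟨α ++ [a], α ++ [b], by simpa [List.prefix_append_right_inj] using hab,
        by simpa [List.prefix_append_right_inj] using Ne.symm hab, hA α a ▸ hxa, hA α b ▸ hyb⟩

end Finite

end SepTreeStructure

theorem Set.Nontrivial.exists_split_of_ultrametric {Y : Type*} [MetricSpace Y] {T : Set Y}
    (hT : T.Nontrivial) (hfin : T.Finite) {ρ : Y → Y → ℝ} {k l : ℝ} (hk : 0 ≤ k)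
    (hρ : ∀ x y z, ρ x y ≤ max (ρ x z) (ρ z y)) (hlow : ∀ x y, dist x y ≤ k * ρ x y)
    (hup : ∀ x y, ρ x y ≤ l * dist x y) :
    ∃ U V, U ∪ V = T ∧ U.Nonempty ∧ V.Nonempty ∧ ∀ a ∈ U, ∀ b ∈ V, diam T ≤ k * l * dist a b := by
  obtain ⟨x, hx, y, hy, hxy⟩ := hT
  obtain ⟨⟨p, q⟩, ⟨hp, hq⟩, hmax⟩ := Set.exists_max_image (T ×ˢ T) (fun z => ρ z.1 z.2)
    (hfin.prod hfin) ⟨(x, y), hx, hy⟩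
  have hmax' : ∀ w ∈ T, ∀ w' ∈ T, ρ w w' ≤ ρ p q := fun w hw w' hw' => hmax (w, w') ⟨hw, hw'⟩
  have hpq : 0 < ρ p q := (pos_of_mul_pos_right ((dist_pos.2 hxy).trans_le (hlow x y)) hk).trans_le
    (hmax' x hx y hy)
  have hpp : ρ p p ≤ 0 := by simpa using hup p p
  refine ⟨{z ∈ T | ρ p z < ρ p q}, {z ∈ T | ρ p q ≤ ρ p z}, ?_, ⟨p, hp, hpp.trans_lt hpq⟩,
    ⟨q, hq, le_rfl⟩, ?_⟩
  · ext z
    by_cases hz : ρ p z < ρ p q <;> simp [hz, not_lt.1]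
  · rintro a ⟨-, ha⟩ b ⟨-, hb⟩
    have hab : ρ p q ≤ ρ a b := by
      by_contra! h
      exact (hb.trans (hρ p b a)).not_gt (max_lt ha h)
    calc diam T ≤ k * ρ p q := diam_le_of_forall_dist_le (mul_nonneg hk hpq.le)
          fun w hw w' hw' => (hlow w w').trans (by gcongr; exact hmax' w hw w' hw')
      _ ≤ k * (l * dist a b) := by gcongr; exact hab.trans (hup a b)
      _ = k * l * dist a b := by ring

theorem SepTreeStructure.exists_of_ultrametric {Y : Type*} [MetricSpace Y] [Finite Y]
    {ρ : Y → Y → ℝ} {k l : ℝ} (hk : 0 ≤ k) (hρ : ∀ x y z, ρ x y ≤ max (ρ x z) (ρ z y))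
    (hlow : ∀ x y, dist x y ≤ k * ρ x y) (hup : ∀ x y, ρ x y ≤ l * dist x y) :
    ∃ A, SepTreeStructure Y (k * l) A := by
  classical
  choose U V hUV hU hV hgap using fun (T : Set Y) (hT : T.Nontrivial) =>
    hT.exists_split_of_ultrametric (Set.toFinite T) hk hρ hlow hup
  let split : Set Y → Bool → Set Y := fun T e =>
    if hT : T.Nontrivial then cond e (V T hT) (U T hT) else T
  refine ⟨_, SepTreeStructure.of_split split ?_ ?_ ?_⟩
  · intro T
    by_cases hT : T.Nontrivial <;> simp [split, hT, hUV]
  · intro T hT e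
    cases e <;> simp [split, hT, hU, hV]
  · intro T hT a ha b hb
    simp only [split, hT, dite_true, cond_false, cond_true] at ha hb
    exact hgap T hT a ha b hb

section ChainDist

variable {X : Type*} [PseudoMetricSpace X]

/-- The subdominant ultrametric of `dist`, i.e. the largest ultrametric below it. -/
noncomputable def chainDist (x y : X) : ℝ :=
  sInf {r : ℝ | 0 ≤ r ∧ ReflTransGen (fun a b => dist a b ≤ r) x y}

theorem chainDist_le {x y : X} {r : ℝ} (hr : 0 ≤ r)
    (hxy : ReflTransGen (fun a b => dist a b ≤ r) x y) : chainDist x y ≤ r :=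
  csInf_le ⟨0, fun _ hs => hs.1⟩ ⟨hr, hxy⟩

theorem chainDist_le_dist (x y : X) : chainDist x y ≤ dist x y :=
  chainDist_le dist_nonneg (.single le_rfl)

theorem le_chainDist {x y : X} {s : ℝ}
    (h : ∀ r, 0 ≤ r → ReflTransGen (fun a b => dist a b ≤ r) x y → s ≤ r) :
    s ≤ chainDist x y :=
  le_csInf ⟨dist x y, dist_nonneg, .single le_rfl⟩ fun r hr => h r hr.1 hr.2

theorem exists_chain_of_chainDist_lt {x y : X} {s : ℝ} (hs : chainDist x y < s) :
    ∃ r < s, 0 ≤ r ∧ ReflTransGen (fun a b => dist a b ≤ r) x y := by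
  obtain ⟨r, ⟨hr, hxy⟩, hrs⟩ :=
    exists_lt_of_csInf_lt (s := {r : ℝ | 0 ≤ r ∧ ReflTransGen (fun a b => dist a b ≤ r) x y})
      ⟨dist x y, dist_nonneg, .single le_rfl⟩ hs
  exact ⟨r, hrs, hr, hxy⟩

theorem chainDist_nonneg (x y : X) : 0 ≤ chainDist x y :=
  le_chainDist fun _ hr _ => hr

theorem chainDist_self (x : X) : chainDist x x = 0 :=
  le_antisymm (by simpa using chainDist_le_dist x x) (chainDist_nonneg x x)

theorem chainDist_comm (x y : X) : chainDist x y = chainDist y x := by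
  have key : ∀ x y : X, chainDist x y ≤ chainDist y x := fun x y =>
    le_chainDist fun r hr hyx => chainDist_le hr <|
      reflTransGen_swap.1 <|
        ReflTransGen.mono (fun a b h => by rwa [Function.swap, dist_comm]) _ _ hyx
  exact le_antisymm (key x y) (key y x)

theorem chainDist_le_max (x y z : X) :
    chainDist x y ≤ max (chainDist x z) (chainDist z y) := by
  refine le_of_forall_pos_le_add fun ε hε => ?_
  obtain ⟨r, hrε, hr, hxz⟩ :=
    exists_chain_of_chainDist_lt (lt_add_of_pos_right (chainDist x z) hε)
  obtain ⟨s, hsε, hs, hzy⟩ :=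
    exists_chain_of_chainDist_lt (lt_add_of_pos_right (chainDist z y) hε)
  calc chainDist x y ≤ max r s :=
        chainDist_le (hr.trans (le_max_left r s)) <|
          (ReflTransGen.mono (fun _ _ h => h.trans (le_max_left r s)) _ _ hxz).trans
            (ReflTransGen.mono (fun _ _ h => h.trans (le_max_right r s)) _ _ hzy)
    _ ≤ max (chainDist x z) (chainDist z y) + ε := by
        rw [← max_add_add_right]
        exact max_le_max hrε.le hsε.le

theorem dist_le_mul_chainDist {C : ℝ} (hC : 0 < C)
    (hchain : ∀ r, 0 ≤ r → ∀ x y : X, ReflTransGen (fun a b => dist a b ≤ r) x y →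
      dist x y ≤ C * r) (x y : X) :
    dist x y ≤ C * chainDist x y := by
  rw [← div_le_iff₀' hC]
  exact le_chainDist fun r hr hxy => (div_le_iff₀' hC).2 (hchain r hr x y hxy)

end ChainDist

theorem isMetricOn_chainDist {X : Type*} [MetricSpace X] {C : ℝ} (hC : 0 < C)
    (hchain : ∀ r, 0 ≤ r → ∀ x y : X, ReflTransGen (fun a b => dist a b ≤ r) x y →
      dist x y ≤ C * r) :
    IsMetricOn (chainDist : X → X → ℝ) := by
  refine ⟨chainDist_nonneg, fun x y => ⟨fun h => ?_, fun h => h ▸ chainDist_self x⟩,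
    chainDist_comm, fun x y z => ?_⟩
  · simpa [h] using dist_le_mul_chainDist hC hchain x y
  · exact (chainDist_le_max x z y).trans
      (max_le_add_of_nonneg (chainDist_nonneg x y) (chainDist_nonneg y z))

theorem dist_le_mul_of_reflTransGen {X : Type*} [MetricSpace X] {C : ℝ}
    (htree : ∀ S : Finset X, ∃ A : List Bool → Set S, SepTreeStructure S C A)
    (hC : 0 ≤ C) {r : ℝ} (hr : 0 ≤ r) {x y : X}
    (hxy : ReflTransGen (fun a b => dist a b ≤ r) x y) : dist x y ≤ C * r := by
  obtain ⟨S, hx, hy, hS⟩ := hxy.exists_finset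
  obtain ⟨A, hA⟩ := htree S
  exact hA.dist_le_mul_of_reflTransGen hC hr hS

/-- **Characterization of `∞`-snowflakes via separated tree structures**: a metric space
is `L`-bi-Lipschitz equivalent to an ultrametric space for some `L ≥ 1` (equivalently,
transporting the metric through the bijection, carries an ultrametric `L`-bi-Lipschitz
comparable with `d`) if and only if there is `C ≥ 1` such that every finite subspace of
`X` supports a `C`-separated tree structure. -/
theorem biLip_ultrametric_iff_finite_sepTree {X : Type*} [MetricSpace X] :
    (∃ L : ℝ, 1 ≤ L ∧ ∃ ρ : X → X → ℝ, IsMetricOn ρ ∧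
      (∀ x y z : X, ρ x y ≤ max (ρ x z) (ρ z y)) ∧
      ∀ x y : X, dist x y / L ≤ ρ x y ∧ ρ x y ≤ L * dist x y) ↔
    (∃ C : ℝ, 1 ≤ C ∧ ∀ S : Finset X,
      ∃ A : List Bool → Set {x // x ∈ S}, SepTreeStructure {x // x ∈ S} C A) := by
  constructor
  · rintro ⟨L, hL, ρ, -, hρ, hbi⟩
    have hL0 : 0 < L := one_pos.trans_le hL
    refine ⟨L * L, one_le_mul_of_one_le_of_one_le hL hL, fun S => ?_⟩
    exact SepTreeStructure.exists_of_ultrametric (ρ := fun a b : S => ρ a b) hL0.le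
      (fun x y z => hρ x y z) (fun x y => (div_le_iff₀' hL0).1 (hbi x y).1)
      (fun x y => (hbi x y).2)
  · rintro ⟨C, hC, htree⟩
    have hC0 : 0 < C := one_pos.trans_le hC
    have hchain : ∀ r, 0 ≤ r → ∀ x y : X, ReflTransGen (fun a b => dist a b ≤ r) x y →
        dist x y ≤ C * r := fun _ hr _ _ => dist_le_mul_of_reflTransGen htree hC0.le hr
    refine ⟨C, hC, chainDist, isMetricOn_chainDist hC0 hchain, chainDist_le_max,
      fun x y => ⟨?_, ?_⟩⟩
    · exact (div_le_iff₀' hC0).2 (dist_le_mul_chainDist hC0 hchain x y)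
    · exact (chainDist_le_dist x y).trans (le_mul_of_one_le_left dist_nonneg hC)
end

section
/- Let (X,d) be a metric space, C ≥ 1, and let S ⊆ X be a finite set with at least two points such that every nonempty proper subset A ⊊ S satisfies dist(A, S \ A) < diam(S)/C. Then there exist a, b ∈ S with d(a,b) = diam(S) and a (diam(S)/C)-chain contained in S connecting a to b. -/
/-- An `ε`-chain connecting `a` to `b`: a finite sequence `x_0 = a, x_1, …, x_k = b`
with `d(x_i, x_{i+1}) < ε` for each `i`. -/
def IsEpsChain {X : Type*} [PseudoMetricSpace X] (ε : ℝ) (a b : X)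
    (k : ℕ) (x : Fin (k + 1) → X) : Prop :=
  x 0 = a ∧ x (Fin.last k) = b ∧ ∀ i : Fin k, dist (x i.castSucc) (x i.succ) < ε

/-!
The points of `S` reachable from `a` by an `ε`-chain inside `S` form a nonempty subset of `S`
that no point of `S` outside it comes within `ε` of; without an `ε`-separation it is all of `S`.
Taking `a, b` to be a pair realising the (attained) diameter of the finite set `S` finishes the
argument.
-/

section

variable {X : Type*} [PseudoMetricSpace X]

theorem IsEpsChain.single (ε : ℝ) (a : X) : IsEpsChain ε a a 0 (fun _ => a) :=
  ⟨rfl, rfl, fun i => i.elim0⟩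

theorem IsEpsChain.snoc {ε : ℝ} {a y z : X} {k : ℕ} {x : Fin (k + 1) → X}
    (hx : IsEpsChain ε a y k x) (hyz : dist y z < ε) :
    IsEpsChain ε a z (k + 1) (Fin.snoc x z) := by
  obtain ⟨h0, hlast, hstep⟩ := hx
  refine ⟨?_, Fin.snoc_last _ _, fun i => ?_⟩
  · simpa only [← Fin.castSucc_zero, Fin.snoc_castSucc] using h0
  · induction i using Fin.lastCases with
    | last => simpa only [Fin.succ_last, Fin.snoc_last, Fin.snoc_castSucc, hlast] using hyz
    | cast j => simpa only [Fin.succ_castSucc, Fin.snoc_castSucc] using hstep j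

def ChainJoinedIn (ε : ℝ) (S : Set X) (a b : X) : Prop :=
  ∃ (k : ℕ) (x : Fin (k + 1) → X), (∀ i, x i ∈ S) ∧ IsEpsChain ε a b k x

theorem ChainJoinedIn.refl {ε : ℝ} {S : Set X} {a : X} (ha : a ∈ S) : ChainJoinedIn ε S a a :=
  ⟨0, fun _ => a, fun _ => ha, IsEpsChain.single ε a⟩

theorem ChainJoinedIn.trans_dist_lt {ε : ℝ} {S : Set X} {a y z : X}
    (hy : ChainJoinedIn ε S a y) (hz : z ∈ S) (hyz : dist y z < ε) : ChainJoinedIn ε S a z := by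
  obtain ⟨k, x, hxS, hx⟩ := hy
  refine ⟨k + 1, Fin.snoc x z, fun i => ?_, hx.snoc hyz⟩
  induction i using Fin.lastCases with
  | last => simpa only [Fin.snoc_last] using hz
  | cast j => simpa only [Fin.snoc_castSucc] using hxS j

theorem Finset.chainJoinedIn_of_forall_exists_dist_lt {ε : ℝ} {S : Finset X}
    (hsep : ∀ A : Finset X, A.Nonempty → A ⊂ S → ∃ p ∈ A, ∃ q ∈ S, q ∉ A ∧ dist p q < ε)
    {a b : X} (ha : a ∈ S) (hb : b ∈ S) : ChainJoinedIn ε S a b := by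
  classical
  set A := S.filter (ChainJoinedIn ε S a)
  have hAS : A = S := by
    by_contra hne
    obtain ⟨p, hpA, q, hqS, hqA, hpq⟩ :=
      hsep A ⟨a, Finset.mem_filter.mpr ⟨ha, .refl ha⟩⟩ (Finset.ssubset_iff_subset_ne.mpr ⟨Finset.filter_subset _ _, hne⟩)
    exact hqA (Finset.mem_filter.mpr ⟨hqS, (Finset.mem_filter.mp hpA).2.trans_dist_lt hqS hpq⟩)
  exact (Finset.mem_filter.mp (hAS ▸ hb : b ∈ A)).2

theorem Finset.exists_dist_eq_diam {S : Finset X} (hS : S.Nonempty) :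
    ∃ a ∈ S, ∃ b ∈ S, dist a b = Metric.diam (S : Set X) := by
  obtain ⟨⟨a, b⟩, hab, hmax⟩ := (S ×ˢ S).exists_max_image (fun p => dist p.1 p.2) (hS.product hS)
  obtain ⟨ha, hb⟩ := Finset.mem_product.mp hab
  refine ⟨a, ha, b, hb, le_antisymm (Metric.dist_le_diam_of_mem S.finite_toSet.isBounded ha hb) ?_⟩
  exact Metric.diam_le_of_forall_dist_le dist_nonneg fun u hu v hv =>
    hmax (u, v) (Finset.mem_product.mpr ⟨hu, hv⟩)

end

theorem chain_of_no_separation_general {X : Type*} [MetricSpace X] (C : ℝ)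
    (S : Finset X) (hS : 2 ≤ S.card)
    (hsep : ∀ A : Finset X, A.Nonempty → A ⊂ S →
      ∃ a ∈ A, ∃ b ∈ S, b ∉ A ∧ dist a b < Metric.diam (S : Set X) / C) :
    ∃ a ∈ S, ∃ b ∈ S, dist a b = Metric.diam (S : Set X) ∧
      ∃ (k : ℕ) (x : Fin (k + 1) → X), (∀ i, x i ∈ S) ∧
        IsEpsChain (Metric.diam (S : Set X) / C) a b k x := by
  have hne : S.Nonempty := Finset.card_pos.mp (by omega)
  obtain ⟨a, ha, b, hb, hab⟩ := Finset.exists_dist_eq_diam hne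
  exact ⟨a, ha, b, hb, hab, Finset.chainJoinedIn_of_forall_exists_dist_lt hsep ha hb⟩

/-- **Chain connectivity of unseparated finite sets**: if `S` is a finite set with at
least two points such that every nonempty proper subset `A ⊊ S` satisfies
`dist(A, S \ A) < diam(S)/C`, then there are `a, b ∈ S` with `d(a,b) = diam S` and a
`(diam S / C)`-chain contained in `S` connecting `a` to `b`. -/
theorem chain_of_no_separation {X : Type*} [MetricSpace X] (C : ℝ) (hC : 1 ≤ C)
    (S : Finset X) (hS : 2 ≤ S.card)
    (hsep : ∀ A : Finset X, A.Nonempty → A ⊂ S →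
      ∃ a ∈ A, ∃ b ∈ S, b ∉ A ∧ dist a b < Metric.diam (S : Set X) / C) :
    ∃ a ∈ S, ∃ b ∈ S, dist a b = Metric.diam (S : Set X) ∧
      ∃ (k : ℕ) (x : Fin (k + 1) → X), (∀ i, x i ∈ S) ∧
        IsEpsChain (Metric.diam (S : Set X) / C) a b k x :=
  chain_of_no_separation_general C S hS hsep
end

section
/- Suppose (X,d) is a metric space with q_X > 1, i.e. there exists q₀ > 1 such that for every q ∈ [1, q₀) and every p ∈ [1, q], (X,d) does not support a (p,q)-metric cotype inequality. Then for every C ≥ 1 there are distinct points a, b ∈ X and a (d(a,b)/C)-chain connecting a to b whose diameter equals d(a,b). -/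
open scoped BigOperators

lemma aux_add_rpow (q a b : ℝ) (hq : 0 ≤ q) (ha : 0 ≤ a) (hb : 0 ≤ b) :
    (a + b) ^ q ≤ 2 ^ q * (a ^ q + b ^ q) := by
  have h1 : a + b ≤ 2 * max a b := by
    rcases le_total a b with h | h
    · rw [max_eq_right h]; linarith
    · rw [max_eq_left h]; linarith
  have h2 : (max a b) ^ q ≤ a ^ q + b ^ q := by
    rcases le_total a b with h | h
    · rw [max_eq_right h]; exact le_add_of_nonneg_left (Real.rpow_nonneg ha q)
    · rw [max_eq_left h]; exact le_add_of_nonneg_right (Real.rpow_nonneg hb q)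
  calc (a + b) ^ q ≤ (2 * max a b) ^ q :=
        Real.rpow_le_rpow (by linarith) h1 hq
    _ = 2 ^ q * (max a b) ^ q := Real.mul_rpow (by norm_num) (le_max_of_le_left ha)
    _ ≤ 2 ^ q * (a ^ q + b ^ q) := by
        have : (0:ℝ) ≤ 2 ^ q := Real.rpow_nonneg (by norm_num) q
        nlinarith

lemma aux_sum_update {n : ℕ} (j : Fin n) (c : Fin 3) (g : (Fin n → Fin 3) → ℝ)
    (hg : ∀ δ, 0 ≤ g δ) :
    ∑ δ : Fin n → Fin 3, g (Function.update δ j c) ≤ 3 * ∑ δ : Fin n → Fin 3, g δ := by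
  classical
  set e := Equiv.funSplitAt j (Fin 3) with he
  have hupd : ∀ p : Fin 3 × ({ i : Fin n // i ≠ j } → Fin 3),
      Function.update (e.symm p) j c = e.symm (c, p.2) := by
    rintro ⟨b, r⟩
    funext i
    by_cases hi : i = j
    · subst hi; simp [he, Function.update, Equiv.funSplitAt, Equiv.piSplitAt]
    · simp [he, Function.update, hi, Equiv.funSplitAt, Equiv.piSplitAt]
  have hsum : ∑ δ : Fin n → Fin 3, g δ
      = ∑ p : Fin 3 × ({ i : Fin n // i ≠ j } → Fin 3), g (e.symm p) :=
    (Equiv.sum_comp e.symm g).symm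
  calc ∑ δ : Fin n → Fin 3, g (Function.update δ j c)
      = ∑ p : Fin 3 × ({ i : Fin n // i ≠ j } → Fin 3), g (Function.update (e.symm p) j c) :=
        (Equiv.sum_comp e.symm (fun δ => g (Function.update δ j c))).symm
    _ = ∑ p : Fin 3 × ({ i : Fin n // i ≠ j } → Fin 3), g (e.symm (c, p.2)) := by
        exact Finset.sum_congr rfl (fun p _ => by rw [hupd])
    _ = ∑ _b : Fin 3, ∑ r : ({ i : Fin n // i ≠ j } → Fin 3), g (e.symm (c, r)) :=
        Fintype.sum_prod_type (f := fun p => g (e.symm (c, p.2)))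
    _ = 3 * ∑ r : ({ i : Fin n // i ≠ j } → Fin 3), g (e.symm (c, r)) := by
        rw [Finset.sum_const, Finset.card_univ, Fintype.card_fin]
        simp [nsmul_eq_mul]
    _ ≤ 3 * ∑ δ : Fin n → Fin 3, g δ := by
        have : ∑ r : ({ i : Fin n // i ≠ j } → Fin 3), g (e.symm (c, r))
            ≤ ∑ δ : Fin n → Fin 3, g δ := by
          rw [hsum, Fintype.sum_prod_type]
          exact Finset.single_le_sum (f := fun b => ∑ r, g (e.symm (b, r)))
            (fun b _ => Finset.sum_nonneg fun r _ => hg _) (Finset.mem_univ c)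
        linarith

lemma lemA {X : Type*} [MetricSpace X] {C : ℝ} (hC : 1 ≤ C)
    (H : ∀ a b : X, a ≠ b → ∀ (k : ℕ) (x : Fin (k + 1) → X),
      IsEpsChain (dist a b / C) a b k x → Metric.diam (Set.range x) ≠ dist a b)
    {ε : ℝ} (hε : 0 < ε) {k : ℕ} (x : Fin (k + 1) → X)
    (hx : ∀ i : Fin k, dist (x i.castSucc) (x i.succ) < ε) :
    Metric.diam (Set.range x) ≤ C * ε := by
  have hCpos : 0 < C := lt_of_lt_of_le one_pos hC
  by_contra hcon
  push_neg at hcon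
  obtain ⟨p, -, hp⟩ := Finset.exists_max_image (Finset.univ : Finset (Fin (k+1) × Fin (k+1)))
    (fun p => dist (x p.1) (x p.2)) ⟨(0, 0), Finset.mem_univ _⟩
  have hbd : Bornology.IsBounded (Set.range x) := (Set.finite_range x).isBounded
  have hdiam_le : Metric.diam (Set.range x) ≤ dist (x p.1) (x p.2) :=
    Metric.diam_le_of_forall_dist_le dist_nonneg (by
      rintro a ⟨i, rfl⟩ b ⟨j, rfl⟩
      exact hp (i, j) (Finset.mem_univ _))
  have hdiam_ge : dist (x p.1) (x p.2) ≤ Metric.diam (Set.range x) :=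
    Metric.dist_le_diam_of_mem hbd ⟨p.1, rfl⟩ ⟨p.2, rfl⟩
  have hdiam : Metric.diam (Set.range x) = dist (x p.1) (x p.2) := le_antisymm hdiam_le hdiam_ge
  set D := dist (x p.1) (x p.2) with hD
  have hDgt : C * ε < D := by rw [← hdiam]; exact hcon
  have hDpos : 0 < D := lt_of_le_of_lt (by positivity) hDgt
  obtain ⟨i₀, j₀, hij, hdij⟩ : ∃ i₀ j₀ : Fin (k+1), (i₀ : ℕ) < (j₀ : ℕ) ∧
      dist (x i₀) (x j₀) = D := by
    rcases lt_trichotomy (p.1 : ℕ) (p.2 : ℕ) with hlt | heq | hgt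
    · exact ⟨p.1, p.2, hlt, rfl⟩
    · exfalso
      have : p.1 = p.2 := Fin.ext heq
      rw [hD, this, dist_self] at hDpos
      exact lt_irrefl 0 hDpos
    · exact ⟨p.2, p.1, hgt, by rw [dist_comm]⟩
  have hne : x i₀ ≠ x j₀ := by
    intro hcontra
    rw [hcontra, dist_self] at hdij
    exact hDpos.ne hdij
  set k' := (j₀ : ℕ) - (i₀ : ℕ) with hk'
  have hk'pos : 0 < k' := Nat.sub_pos_of_lt hij
  have hjk : (j₀ : ℕ) ≤ k := Nat.lt_succ_iff.mp j₀.isLt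
  set y : Fin (k' + 1) → X := fun t => x ⟨(i₀ : ℕ) + (t : ℕ), by omega⟩ with hy
  have hεle : ε ≤ dist (x i₀) (x j₀) / C := by
    rw [hdij, le_div_iff₀ hCpos]
    calc ε * C = C * ε := mul_comm _ _
      _ ≤ D := hDgt.le
  have hchain : IsEpsChain (dist (x i₀) (x j₀) / C) (x i₀) (x j₀) k' y := by
    refine ⟨?_, ?_, ?_⟩
    · show x ⟨(i₀ : ℕ) + ((0 : Fin (k'+1)) : ℕ), _⟩ = x i₀
      congr 1
    · show x ⟨(i₀ : ℕ) + ((Fin.last k' : Fin (k'+1)) : ℕ), _⟩ = x j₀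
      congr 1
      ext
      simp only [Fin.val_last]
      omega
    · intro t
      have hlt : (i₀ : ℕ) + (t : ℕ) < k := by
        have := t.isLt
        omega
      have : dist (y t.castSucc) (y t.succ)
          = dist (x (⟨(i₀ : ℕ) + (t : ℕ), hlt⟩ : Fin k).castSucc)
                 (x (⟨(i₀ : ℕ) + (t : ℕ), hlt⟩ : Fin k).succ) := by
        congr 1
      rw [this]
      exact lt_of_lt_of_le (hx _) hεle
  refine H (x i₀) (x j₀) hne k' y hchain ?_
  have hsub : Set.range y ⊆ Set.range x := by
    rintro a ⟨t, rfl⟩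
    exact ⟨_, rfl⟩
  apply le_antisymm
  · calc Metric.diam (Set.range y) ≤ Metric.diam (Set.range x) := Metric.diam_mono hsub hbd
      _ = D := hdiam
      _ = dist (x i₀) (x j₀) := hdij.symm
  · exact Metric.dist_le_diam_of_mem ((Set.finite_range y).isBounded)
      ⟨0, hchain.1⟩ ⟨Fin.last k', hchain.2.1⟩

lemma lemB {X : Type*} [MetricSpace X] {C : ℝ} (hC : 1 ≤ C)
    (H : ∀ a b : X, a ≠ b → ∀ (k : ℕ) (x : Fin (k + 1) → X),
      IsEpsChain (dist a b / C) a b k x → Metric.diam (Set.range x) ≠ dist a b)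
    {q : ℝ} (hq : 1 ≤ q) {k : ℕ} (x : Fin (k + 1) → X) :
    dist (x 0) (x (Fin.last k)) ^ q ≤ C ^ q * ∑ i : Fin k, dist (x i.castSucc) (x i.succ) ^ q := by
  have hq0 : (0:ℝ) < q := lt_of_lt_of_le one_pos hq
  have hCpos : (0:ℝ) < C := lt_of_lt_of_le one_pos hC
  set S : ℝ := ∑ i : Fin k, dist (x i.castSucc) (x i.succ) ^ q with hS
  have hS0 : 0 ≤ S := Finset.sum_nonneg fun i _ => Real.rpow_nonneg dist_nonneg q
  have key : dist (x 0) (x (Fin.last k)) ≤ C * S ^ (1/q) := by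
    apply le_of_forall_pos_le_add
    intro η hη
    have hstep : ∀ i : Fin k, dist (x i.castSucc) (x i.succ) < S ^ (1/q) + η / C := by
      intro i
      have h1 : dist (x i.castSucc) (x i.succ) ^ q ≤ S :=
        Finset.single_le_sum (f := fun i => dist (x i.castSucc) (x i.succ) ^ q)
          (fun i _ => Real.rpow_nonneg dist_nonneg q) (Finset.mem_univ i)
      have h2 : dist (x i.castSucc) (x i.succ) ≤ S ^ (1/q) := by
        have h3 := Real.rpow_le_rpow (Real.rpow_nonneg dist_nonneg q) h1
          (le_of_lt (by positivity : (0:ℝ) < 1/q))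
        rw [one_div] at h3
        rwa [Real.rpow_rpow_inv dist_nonneg hq0.ne', ← one_div] at h3
      have : 0 < η / C := div_pos hη hCpos
      linarith
    have := lemA hC H (by positivity : (0:ℝ) < S ^ (1/q) + η / C) x hstep
    have hmem : dist (x 0) (x (Fin.last k)) ≤ Metric.diam (Set.range x) :=
      Metric.dist_le_diam_of_mem ((Set.finite_range x).isBounded) ⟨0, rfl⟩ ⟨Fin.last k, rfl⟩
    calc dist (x 0) (x (Fin.last k)) ≤ Metric.diam (Set.range x) := hmem
      _ ≤ C * (S ^ (1/q) + η / C) := this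
      _ = C * S ^ (1/q) + η := by field_simp
  calc dist (x 0) (x (Fin.last k)) ^ q ≤ (C * S ^ (1/q)) ^ q :=
        Real.rpow_le_rpow dist_nonneg key hq0.le
    _ = C ^ q * (S ^ (1/q)) ^ q := Real.mul_rpow hCpos.le (Real.rpow_nonneg hS0 _)
    _ = C ^ q * S := by rw [one_div, Real.rpow_inv_rpow hS0 hq0.ne']

lemma bridge (A B P mpow tpow : ℝ) (hB : 0 ≤ B) (hP : 0 ≤ P) (hm : 0 < mpow) (ht : 0 < tpow)
    (key : A * tpow ≤ P * B) : A / mpow ≤ P * (B / (mpow * tpow)) := by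
  rw [mul_div_assoc' P B (mpow * tpow), div_le_div_iff₀ hm (by positivity)]
  calc A * (mpow * tpow) = (A * tpow) * mpow := by ring
    _ ≤ (P * B) * mpow := mul_le_mul_of_nonneg_right key hm.le

/-- **Corollary (weak non-linear Maurey–Pisier for cotype 1)**: if `q_X > 1`, i.e. there
is `q₀ > 1` such that `X` supports no `(p,q)`-metric cotype inequality for any
`1 ≤ p ≤ q < q₀`, then for every `C ≥ 1` there are distinct `a, b ∈ X` and a
`(d(a,b)/C)`-chain connecting `a` to `b` whose diameter equals `d(a,b)`. -/
theorem chain_of_qX_gt_one {X : Type*} [MetricSpace X]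
    (h : ∃ q₀ : ℝ, 1 < q₀ ∧ ∀ q : ℝ, 1 ≤ q → q < q₀ →
      ∀ p : ℝ, 1 ≤ p → p ≤ q → ¬ SupportsCotype X p q)
    (C : ℝ) (hC : 1 ≤ C) :
    ∃ a b : X, a ≠ b ∧ ∃ (k : ℕ) (x : Fin (k + 1) → X),
      IsEpsChain (dist a b / C) a b k x ∧ Metric.diam (Set.range x) = dist a b := by
  by_contra hcon
  push_neg at hcon
  obtain ⟨q₀, hq₀, hno⟩ := h
  set q : ℝ := 1 + min 1 (q₀ - 1) / 2 with hqdef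
  have hmin : 0 < min 1 (q₀ - 1) := lt_min one_pos (by linarith)
  have hq1 : 1 < q := by rw [hqdef]; linarith
  have hq0 : (0:ℝ) < q := lt_trans one_pos hq1
  have hqm1 : (0:ℝ) < q - 1 := by linarith
  have hqlt : q < q₀ := by
    have h1 : min 1 (q₀ - 1) ≤ q₀ - 1 := min_le_right _ _
    rw [hqdef]; linarith
  refine hno q hq1.le hqlt q hq1.le le_rfl ?_
  have hCpos : (0:ℝ) < C := lt_of_lt_of_le one_pos hC
  set K : ℕ := ⌈1/(q-1)⌉₊ + 1 with hK
  have hKq : 1 ≤ (K:ℝ) * (q - 1) := by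
    have h1 : 1/(q-1) ≤ (⌈1/(q-1)⌉₊ : ℝ) := Nat.le_ceil _
    have h2 : 1/(q-1) ≤ (K:ℝ) := by rw [hK]; push_cast; linarith
    calc (1:ℝ) = (1/(q-1)) * (q-1) := by field_simp
      _ ≤ (K:ℝ) * (q-1) := mul_le_mul_of_nonneg_right h2 hqm1.le
  refine ⟨6 * C, by linarith, fun n => 2 * (n+1)^K,
    fun n => ⟨⟨(n+1)^K, two_mul _⟩, by positivity⟩, ?_⟩
  intro n f
  set mn : ℕ := 2 * (n+1)^K with hmn
  have hmnpos : 0 < mn := by positivity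
  have hmn1 : (1:ℝ) ≤ (mn:ℝ) := by exact_mod_cast hmnpos
  haveI : NeZero mn := ⟨hmnpos.ne'⟩
  have hhalf : mn / 2 = (n+1)^K := by omega
  -- the exponent `1 - q/q` is zero
  have hexp : (1:ℝ) - q/q = 0 := by rw [div_self hq0.ne']; ring
  rw [hexp, Real.rpow_zero, mul_one]
  simp only [cotypeLHS, cotypeRHS]
  apply bridge
  · exact Finset.sum_nonneg fun ε _ => Finset.sum_nonneg fun δ _ => Real.rpow_nonneg dist_nonneg q
  · positivity
  · positivity
  · positivity
  -- the core inequality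
  set e : Fin n → (Fin n → ZMod mn) := fun j i => if i = j then 1 else 0 with he
  set v : (Fin n → Fin 3) → (Fin n → ZMod mn) :=
    fun δ i => (((δ i : ℤ) - 1 : ℤ) : ZMod mn) with hv
  set B : ℝ := ∑ ε : Fin n → ZMod mn, ∑ δ : Fin n → Fin 3,
      dist (f ε) (f (ε + fun i => (((δ i : ℤ) - 1 : ℤ) : ZMod mn))) ^ q with hB
  have hB0 : 0 ≤ B :=
    Finset.sum_nonneg fun ε _ => Finset.sum_nonneg fun δ _ => Real.rpow_nonneg dist_nonneg q
  have hBv : B = ∑ ε : Fin n → ZMod mn, ∑ δ : Fin n → Fin 3,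
      dist (f ε) (f (ε + v δ)) ^ q := rfl
  -- Step 1: pointwise chain bound in direction j
  have step1 : ∀ (j : Fin n) (ε : Fin n → ZMod mn),
      dist (f ε) (f (ε + fun i => if i = j then ((mn / 2 : ℕ) : ZMod mn) else 0)) ^ q
        ≤ C ^ q * ∑ t : Fin (mn/2),
            dist (f (ε + (t:ℕ) • e j)) (f (ε + ((t:ℕ)+1) • e j)) ^ q := by
    intro j ε
    have hlast : ε + (mn/2 : ℕ) • e j
        = ε + fun i => if i = j then ((mn / 2 : ℕ) : ZMod mn) else 0 := by
      congr 1
      funext i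
      by_cases hij : i = j
      · simp [he, hij, nsmul_eq_mul]
      · simp [he, hij]
    have hB' := lemB hC hcon hq1.le (x := fun t : Fin (mn/2 + 1) => f (ε + (t:ℕ) • e j))
    simp only [Fin.val_zero, Fin.val_last, Fin.coe_castSucc, Fin.val_succ] at hB'
    rw [zero_smul, add_zero, hlast] at hB'
    exact hB'
  -- Step 2: translation invariance along the path
  have step2 : ∀ j : Fin n,
      ∑ ε : Fin n → ZMod mn, ∑ t : Fin (mn/2),
          dist (f (ε + (t:ℕ) • e j)) (f (ε + ((t:ℕ)+1) • e j)) ^ q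
        = ((mn/2 : ℕ) : ℝ) * ∑ ε : Fin n → ZMod mn, dist (f ε) (f (ε + e j)) ^ q := by
    intro j
    rw [Finset.sum_comm]
    have hterm : ∀ t : Fin (mn/2),
        ∑ ε : Fin n → ZMod mn, dist (f (ε + (t:ℕ) • e j)) (f (ε + ((t:ℕ)+1) • e j)) ^ q
          = ∑ ε : Fin n → ZMod mn, dist (f ε) (f (ε + e j)) ^ q := by
      intro t
      have hcomp := Equiv.sum_comp (Equiv.addRight ((t:ℕ) • e j))
        (fun z => dist (f z) (f (z + e j)) ^ q)
      simp only [Equiv.coe_addRight] at hcomp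
      rw [← hcomp]
      apply Finset.sum_congr rfl
      intro ε _
      have : ε + ((t:ℕ)+1) • e j = (ε + (t:ℕ) • e j) + e j := by
        rw [succ_nsmul, ← add_assoc]
      rw [this]
    rw [Finset.sum_congr rfl (fun t _ => hterm t), Finset.sum_const, Finset.card_univ,
      Fintype.card_fin, nsmul_eq_mul]
  -- Step 3: comparing an edge with the diagonal sums
  have step3 : ∀ j : Fin n,
      (3:ℝ)^n * ∑ ε : Fin n → ZMod mn, dist (f ε) (f (ε + e j)) ^ q
        ≤ 2 ^ q * (3 * B + 3 * B) := by
    intro j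
    have hptwise : ∀ (ε : Fin n → ZMod mn) (δ : Fin n → Fin 3),
        dist (f ε) (f (ε + e j)) ^ q
          ≤ 2 ^ q * (dist (f ε) (f (ε + v (Function.update δ j 2))) ^ q
            + dist (f (ε + e j)) (f ((ε + e j) + v (Function.update δ j 1))) ^ q) := by
      intro ε δ
      have hsplit : ε + v (Function.update δ j 2) = (ε + e j) + v (Function.update δ j 1) := by
        funext i
        show ε i + v (Function.update δ j 2) i = (ε i + e j i) + v (Function.update δ j 1) i
        by_cases hij : i = j
        · subst hij
          simp only [hv, he, Function.update_self, if_pos rfl]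
          have h2 : ((2 : Fin 3) : ℤ) = 2 := rfl
          have h1 : ((1 : Fin 3) : ℤ) = 1 := rfl
          rw [h2, h1]
          norm_num
        · simp only [hv, he, Function.update_of_ne hij, if_neg hij, add_zero]
      have htri : dist (f ε) (f (ε + e j))
          ≤ dist (f ε) (f (ε + v (Function.update δ j 2)))
            + dist (f (ε + e j)) (f ((ε + e j) + v (Function.update δ j 1))) := by
        calc dist (f ε) (f (ε + e j))
            ≤ dist (f ε) (f (ε + v (Function.update δ j 2)))
              + dist (f (ε + v (Function.update δ j 2))) (f (ε + e j)) := dist_triangle _ _ _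
          _ = _ := by rw [hsplit, dist_comm (f ((ε + e j) + v (Function.update δ j 1)))]
      calc dist (f ε) (f (ε + e j)) ^ q
          ≤ (dist (f ε) (f (ε + v (Function.update δ j 2)))
              + dist (f (ε + e j)) (f ((ε + e j) + v (Function.update δ j 1)))) ^ q :=
            Real.rpow_le_rpow dist_nonneg htri hq0.le
        _ ≤ _ := aux_add_rpow q _ _ hq0.le dist_nonneg dist_nonneg
    have hcard : (3:ℝ)^n = (Fintype.card (Fin n → Fin 3) : ℝ) := by
      rw [Fintype.card_fun, Fintype.card_fin, Fintype.card_fin]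
      push_cast
      ring
    calc (3:ℝ)^n * ∑ ε : Fin n → ZMod mn, dist (f ε) (f (ε + e j)) ^ q
        = ∑ ε : Fin n → ZMod mn, ∑ δ : Fin n → Fin 3, dist (f ε) (f (ε + e j)) ^ q := by
          rw [Finset.mul_sum]
          apply Finset.sum_congr rfl
          intro ε _
          rw [Finset.sum_const, Finset.card_univ, nsmul_eq_mul, hcard]
      _ ≤ ∑ ε : Fin n → ZMod mn, ∑ δ : Fin n → Fin 3,
            2 ^ q * (dist (f ε) (f (ε + v (Function.update δ j 2))) ^ q
              + dist (f (ε + e j)) (f ((ε + e j) + v (Function.update δ j 1))) ^ q) := by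
          apply Finset.sum_le_sum
          intro ε _
          exact Finset.sum_le_sum fun δ _ => hptwise ε δ
      _ = 2 ^ q * ((∑ ε : Fin n → ZMod mn, ∑ δ : Fin n → Fin 3,
              dist (f ε) (f (ε + v (Function.update δ j 2))) ^ q)
            + ∑ ε : Fin n → ZMod mn, ∑ δ : Fin n → Fin 3,
              dist (f (ε + e j)) (f ((ε + e j) + v (Function.update δ j 1))) ^ q) := by
          rw [← Finset.sum_add_distrib]
          rw [Finset.mul_sum]
          apply Finset.sum_congr rfl
          intro ε _
          rw [← Finset.sum_add_distrib, Finset.mul_sum]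
      _ ≤ 2 ^ q * (3 * B + 3 * B) := by
          have hterm1 : ∑ ε : Fin n → ZMod mn, ∑ δ : Fin n → Fin 3,
              dist (f ε) (f (ε + v (Function.update δ j 2))) ^ q ≤ 3 * B := by
            rw [hBv, Finset.mul_sum]
            apply Finset.sum_le_sum
            intro ε _
            exact aux_sum_update j 2 (fun δ' => dist (f ε) (f (ε + v δ')) ^ q)
              (fun δ' => Real.rpow_nonneg dist_nonneg q)
          have hterm2 : ∑ ε : Fin n → ZMod mn, ∑ δ : Fin n → Fin 3,
              dist (f (ε + e j)) (f ((ε + e j) + v (Function.update δ j 1))) ^ q ≤ 3 * B := by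
            have hstep : ∀ ε : Fin n → ZMod mn, ∑ δ : Fin n → Fin 3,
                dist (f (ε + e j)) (f ((ε + e j) + v (Function.update δ j 1))) ^ q
                  ≤ 3 * ∑ δ : Fin n → Fin 3, dist (f (ε + e j)) (f ((ε + e j) + v δ)) ^ q :=
              fun ε => aux_sum_update j 1 (fun δ' => dist (f (ε + e j)) (f ((ε + e j) + v δ')) ^ q)
                (fun δ' => Real.rpow_nonneg dist_nonneg q)
            calc ∑ ε : Fin n → ZMod mn, ∑ δ : Fin n → Fin 3,
                  dist (f (ε + e j)) (f ((ε + e j) + v (Function.update δ j 1))) ^ q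
                ≤ ∑ ε : Fin n → ZMod mn,
                    3 * ∑ δ : Fin n → Fin 3, dist (f (ε + e j)) (f ((ε + e j) + v δ)) ^ q :=
                  Finset.sum_le_sum fun ε _ => hstep ε
              _ = 3 * ∑ ε : Fin n → ZMod mn,
                    ∑ δ : Fin n → Fin 3, dist (f (ε + e j)) (f ((ε + e j) + v δ)) ^ q := by
                  rw [Finset.mul_sum]
              _ = 3 * B := by
                  rw [hBv]
                  congr 1
                  have hcomp := Equiv.sum_comp (Equiv.addRight (e j))
                    (fun z => ∑ δ : Fin n → Fin 3, dist (f z) (f (z + v δ)) ^ q)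
                  simp only [Equiv.coe_addRight] at hcomp
                  exact hcomp
          have h2q : (0:ℝ) ≤ 2 ^ q := Real.rpow_nonneg (by norm_num) q
          have := add_le_add hterm1 hterm2
          nlinarith
  -- assemble
  set W : ℝ := (((n+1)^K : ℕ) : ℝ) with hW
  have hW1 : (1:ℝ) ≤ W := by
    rw [hW]
    exact_mod_cast Nat.one_le_iff_ne_zero.mpr (by positivity)
  have hmncast : (mn:ℝ) = 2 * W := by rw [hmn, hW]; push_cast; ring
  have hhalfcast : ((mn/2 : ℕ) : ℝ) = W := by rw [hhalf, hW]
  have hmain : (∑ ε : Fin n → ZMod mn, ∑ j : Fin n,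
      dist (f ε) (f (ε + fun i => if i = j then ((mn / 2 : ℕ) : ZMod mn) else 0)) ^ q)
        * (3:ℝ)^n ≤ (6*C) ^ q * (mn:ℝ) ^ q * B := by
    rw [Finset.sum_comm]
    have hjbound : ∀ j : Fin n,
        (∑ ε : Fin n → ZMod mn,
          dist (f ε) (f (ε + fun i => if i = j then ((mn / 2 : ℕ) : ZMod mn) else 0)) ^ q)
            * (3:ℝ)^n ≤ C ^ q * W * (2 ^ q * (3 * B + 3 * B)) := by
      intro j
      have h1 : ∑ ε : Fin n → ZMod mn,
          dist (f ε) (f (ε + fun i => if i = j then ((mn / 2 : ℕ) : ZMod mn) else 0)) ^ q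
            ≤ C ^ q * (W * ∑ ε : Fin n → ZMod mn, dist (f ε) (f (ε + e j)) ^ q) := by
        calc ∑ ε : Fin n → ZMod mn,
            dist (f ε) (f (ε + fun i => if i = j then ((mn / 2 : ℕ) : ZMod mn) else 0)) ^ q
            ≤ ∑ ε : Fin n → ZMod mn, C ^ q * ∑ t : Fin (mn/2),
                dist (f (ε + (t:ℕ) • e j)) (f (ε + ((t:ℕ)+1) • e j)) ^ q :=
              Finset.sum_le_sum fun ε _ => step1 j ε
          _ = C ^ q * ∑ ε : Fin n → ZMod mn, ∑ t : Fin (mn/2),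
                dist (f (ε + (t:ℕ) • e j)) (f (ε + ((t:ℕ)+1) • e j)) ^ q := by
              rw [Finset.mul_sum]
          _ = C ^ q * (W * ∑ ε : Fin n → ZMod mn, dist (f ε) (f (ε + e j)) ^ q) := by
              rw [step2 j, hhalfcast]
      have hCq : (0:ℝ) ≤ C ^ q := Real.rpow_nonneg hCpos.le q
      have hEj : 0 ≤ ∑ ε : Fin n → ZMod mn, dist (f ε) (f (ε + e j)) ^ q :=
        Finset.sum_nonneg fun ε _ => Real.rpow_nonneg dist_nonneg q
      calc (∑ ε : Fin n → ZMod mn,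
          dist (f ε) (f (ε + fun i => if i = j then ((mn / 2 : ℕ) : ZMod mn) else 0)) ^ q)
            * (3:ℝ)^n
          ≤ (C ^ q * (W * ∑ ε : Fin n → ZMod mn, dist (f ε) (f (ε + e j)) ^ q)) * (3:ℝ)^n :=
            mul_le_mul_of_nonneg_right h1 (by positivity)
        _ = C ^ q * W * ((3:ℝ)^n * ∑ ε : Fin n → ZMod mn, dist (f ε) (f (ε + e j)) ^ q) := by
            ring
        _ ≤ C ^ q * W * (2 ^ q * (3 * B + 3 * B)) := by
            apply mul_le_mul_of_nonneg_left (step3 j)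
            positivity
    calc (∑ j : Fin n, ∑ ε : Fin n → ZMod mn,
        dist (f ε) (f (ε + fun i => if i = j then ((mn / 2 : ℕ) : ZMod mn) else 0)) ^ q)
          * (3:ℝ)^n
        = ∑ j : Fin n, (∑ ε : Fin n → ZMod mn,
            dist (f ε) (f (ε + fun i => if i = j then ((mn / 2 : ℕ) : ZMod mn) else 0)) ^ q)
              * (3:ℝ)^n := by rw [Finset.sum_mul]
      _ ≤ ∑ _j : Fin n, C ^ q * W * (2 ^ q * (3 * B + 3 * B)) :=
          Finset.sum_le_sum fun j _ => hjbound j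
      _ = (n:ℝ) * (C ^ q * W * (2 ^ q * (3 * B + 3 * B))) := by
          rw [Finset.sum_const, Finset.card_univ, Fintype.card_fin, nsmul_eq_mul]
      _ ≤ (6*C) ^ q * (mn:ℝ) ^ q * B := by
        -- final numeric estimate
        have e4 : (3:ℝ) ≤ 3 ^ q := by
          calc (3:ℝ) = 3 ^ (1:ℝ) := (Real.rpow_one 3).symm
            _ ≤ 3 ^ q := Real.rpow_le_rpow_of_exponent_le (by norm_num) hq1.le
        have e3 : (n:ℝ) ≤ (mn:ℝ) ^ (q-1) := by
          have hWK : W = ((n+1):ℝ) ^ (K:ℕ) := by rw [hW]; push_cast; ring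
          have hb1 : (1:ℝ) ≤ ((n+1):ℝ) := by exact_mod_cast Nat.one_le_iff_ne_zero.mpr (by omega)
          calc (n:ℝ) ≤ ((n+1):ℝ) ^ ((1:ℝ)) := by rw [Real.rpow_one]; push_cast; linarith
            _ ≤ ((n+1):ℝ) ^ ((K:ℝ) * (q-1)) :=
                Real.rpow_le_rpow_of_exponent_le hb1 hKq
            _ = (((n+1):ℝ) ^ (K:ℕ)) ^ (q-1) := by
                rw [← Real.rpow_natCast ((n+1):ℝ) K, ← Real.rpow_mul (by linarith)]
            _ = W ^ (q-1) := by rw [hWK]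
            _ ≤ (mn:ℝ) ^ (q-1) := by
                apply Real.rpow_le_rpow (by linarith) _ hqm1.le
                rw [hmncast]; linarith
        have e1 : ((6:ℝ)*C) ^ q = 2 ^ q * 3 ^ q * C ^ q := by
          rw [show ((6:ℝ)*C) = 2 * 3 * C by norm_num]
          rw [Real.mul_rpow (by norm_num) hCpos.le, Real.mul_rpow (by norm_num) (by norm_num)]
        have e2 : (mn:ℝ) ^ q = (mn:ℝ) ^ (q-1) * (mn:ℝ) := by
          have hrw : (mn:ℝ) ^ (q-1) * (mn:ℝ) ^ (1:ℝ) = (mn:ℝ) ^ q := by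
            rw [← Real.rpow_add (by linarith : (0:ℝ) < (mn:ℝ)), sub_add_cancel]
          rw [← hrw, Real.rpow_one]
        have h6n : 6 * (n:ℝ) ≤ 2 * (3 ^ q * (mn:ℝ) ^ (q-1)) := by
          have := mul_le_mul e4 e3 (Nat.cast_nonneg n) (Real.rpow_nonneg (by norm_num) q)
          linarith
        have hfac : (0:ℝ) ≤ 2 ^ q * C ^ q * W * B := by positivity
        calc (n:ℝ) * (C ^ q * W * (2 ^ q * (3 * B + 3 * B)))
            = (6 * (n:ℝ)) * (2 ^ q * C ^ q * W * B) := by ring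
          _ ≤ (2 * (3 ^ q * (mn:ℝ) ^ (q-1))) * (2 ^ q * C ^ q * W * B) :=
              mul_le_mul_of_nonneg_right h6n hfac
          _ = (6*C) ^ q * (mn:ℝ) ^ q * B := by rw [e1, e2, hmncast]; ring
  exact hmain
end

section
/- Let 1 ≤ p ≤ q < ∞, Γ ≥ 1, and fix a scaling function m : ℕ → 2ℕ. Let ((X_k, d_k), p_k), k ∈ ℕ, be pointed metric spaces each of which satisfies the (p,q)-metric cotype inequality with constant Γ and scaling function m(·). Let ((X,d), p_∞) be a pointed metric space such that for all r > 0 and c > 0 there is K ∈ ℕ with the property: for every k ≥ K there exists a map φ : X_k → X with |d_k(y,z) − d(φ(y),φ(z))| ≤ c for all y,z ∈ X_k, φ(p_k) = p_∞, and φ(X_k) c-dense in the ball B(p_∞, r − c). Then (X,d) satisfies the (p,q)-metric cotype inequality with constant 4Γ and scaling function m(·). -/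
open scoped BigOperators

private lemma rpow_add_le_aux {p x y : ℝ} (hp : 0 ≤ p) (hx : 0 ≤ x) (hy : 0 ≤ y) :
    (x + y) ^ p ≤ 2 ^ p * (x ^ p + y ^ p) := by
  have h2 : (0:ℝ) ≤ 2 ^ p := Real.rpow_nonneg (by norm_num) p
  have hxp : (0:ℝ) ≤ x ^ p := Real.rpow_nonneg hx p
  have hyp : (0:ℝ) ≤ y ^ p := Real.rpow_nonneg hy p
  rcases le_total x y with h | h
  · calc (x + y) ^ p ≤ (2 * y) ^ p := Real.rpow_le_rpow (by linarith) (by linarith) hp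
      _ = 2 ^ p * y ^ p := Real.mul_rpow (by norm_num) hy
      _ ≤ 2 ^ p * (x ^ p + y ^ p) := by nlinarith
  · calc (x + y) ^ p ≤ (2 * x) ^ p := Real.rpow_le_rpow (by linarith) (by linarith) hp
      _ = 2 ^ p * x ^ p := Real.mul_rpow (by norm_num) hx
      _ ≤ 2 ^ p * (x ^ p + y ^ p) := by nlinarith

private lemma sum_rpow_le_aux {ι : Type*} [Fintype ι] {p s : ℝ} (hp : 0 ≤ p) (hs : 0 ≤ s)
    {a b : ι → ℝ} (ha : ∀ i, 0 ≤ a i) (hb : ∀ i, 0 ≤ b i) (hab : ∀ i, a i ≤ b i + s) :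
    ∑ i, a i ^ p ≤ 2 ^ p * (∑ i, b i ^ p) + 2 ^ p * s ^ p * (Fintype.card ι : ℝ) := by
  calc ∑ i, a i ^ p ≤ ∑ i, (2 ^ p * b i ^ p + 2 ^ p * s ^ p) := by
        refine Finset.sum_le_sum fun i _ => ?_
        calc a i ^ p ≤ (b i + s) ^ p := Real.rpow_le_rpow (ha i) (hab i) hp
          _ ≤ 2 ^ p * (b i ^ p + s ^ p) := rpow_add_le_aux hp (hb i) hs
          _ = 2 ^ p * b i ^ p + 2 ^ p * s ^ p := by ring
    _ = 2 ^ p * (∑ i, b i ^ p) + 2 ^ p * s ^ p * (Fintype.card ι : ℝ) := by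
        rw [Finset.sum_add_distrib, ← Finset.mul_sum, Finset.sum_const, Finset.card_univ,
          nsmul_eq_mul]
        ring

private lemma sum2_rpow_le_aux {ι κ : Type*} [Fintype ι] [Fintype κ] {p s : ℝ}
    (hp : 0 ≤ p) (hs : 0 ≤ s) {a b : ι → κ → ℝ}
    (ha : ∀ i j, 0 ≤ a i j) (hb : ∀ i j, 0 ≤ b i j) (hab : ∀ i j, a i j ≤ b i j + s) :
    ∑ i, ∑ j, a i j ^ p ≤ 2 ^ p * (∑ i, ∑ j, b i j ^ p)
      + 2 ^ p * s ^ p * ((Fintype.card ι : ℝ) * (Fintype.card κ : ℝ)) := by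
  have key := sum_rpow_le_aux (ι := ι × κ) hp hs (a := fun x => a x.1 x.2)
    (b := fun x => b x.1 x.2) (fun x => ha x.1 x.2) (fun x => hb x.1 x.2)
    (fun x => hab x.1 x.2)
  simp only [Fintype.sum_prod_type, Fintype.card_prod, Nat.cast_mul] at key
  exact key

/-- **Metric cotype passes to pointed Gromov–Hausdorff limits**: if each pointed space
`(X_k, p_k)` satisfies the `(p,q)`-metric cotype inequality with constant `Γ` and scaling
function `m(·)`, and for all `r, c > 0` there is `K` such that for `k ≥ K` there is a
`c`-rough isometry `φ : X_k → X` with `φ(p_k) = p_∞` and `φ(X_k)` `c`-dense in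
`B(p_∞, r - c)`, then `(X, p_∞)` satisfies the `(p,q)`-metric cotype inequality with
constant `4Γ` and scaling function `m(·)`. -/
theorem cotype_GH_limit (p q Γ : ℝ) (hp : 1 ≤ p) (hpq : p ≤ q) (hΓ : 1 ≤ Γ)
    (m : ℕ → ℕ) (hm : ∀ n, Even (m n) ∧ 0 < m n)
    (Xs : ℕ → Type*) [∀ k, MetricSpace (Xs k)] (pts : ∀ k, Xs k)
    (X : Type*) [MetricSpace X] (pInf : X)
    (hcot : ∀ k : ℕ, ∀ n : ℕ, SatisfiesCotype (Xs k) p q Γ n (m n) (hm n).2.ne')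
    (hGH : ∀ r : ℝ, 0 < r → ∀ c : ℝ, 0 < c → ∃ K : ℕ, ∀ k : ℕ, K ≤ k →
      ∃ φ : Xs k → X,
        (∀ y z : Xs k, |dist y z - dist (φ y) (φ z)| ≤ c) ∧
        φ (pts k) = pInf ∧
        ∀ x ∈ Metric.ball pInf (r - c), ∃ y : Xs k, dist (φ y) x ≤ c) :
    ∀ n : ℕ, SatisfiesCotype X p q (4 * Γ) n (m n) (hm n).2.ne' := by
  intro n f
  have hMpos : 0 < m n := (hm n).2
  haveI : NeZero (m n) := ⟨(hm n).2.ne'⟩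
  have hp0 : (0:ℝ) ≤ p := by linarith
  have hΓ0 : (0:ℝ) ≤ Γ := by linarith
  have hMnpos : (0:ℝ) < (m n : ℝ) ^ n := by positivity
  have ht2 : (0:ℝ) ≤ (2:ℝ) ^ p := Real.rpow_nonneg (by norm_num) p
  set Cn : ℝ := Γ ^ p * (m n : ℝ) ^ p * (n : ℝ) ^ (1 - p / q) with hCn_def
  have hCn0 : 0 ≤ Cn := by
    exact mul_nonneg (mul_nonneg (Real.rpow_nonneg hΓ0 p)
      (Real.rpow_nonneg (Nat.cast_nonneg _) p)) (Real.rpow_nonneg (Nat.cast_nonneg _) _)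
  set KK : ℝ := (4:ℝ) ^ p * Cn + 2 ^ p * n with hKK_def
  have hKK0 : 0 ≤ KK := by
    have h4 : (0:ℝ) ≤ (4:ℝ) ^ p := Real.rpow_nonneg (by norm_num) p
    have hn0 : (0:ℝ) ≤ (n:ℝ) := Nat.cast_nonneg n
    positivity
  have main : ∀ ε : ℝ, 0 < ε → cotypeLHS p n (m n) (hm n).2.ne' f ≤
      (4 * Γ) ^ p * (m n : ℝ) ^ p * (n : ℝ) ^ (1 - p / q) *
        cotypeRHS p n (m n) (hm n).2.ne' f + ε := by
    intro ε hε
    set s : ℝ := min 1 (ε / (KK + 1)) with hs_def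
    have hs0 : 0 < s := lt_min one_pos (div_pos hε (by linarith))
    have hs1 : s ≤ 1 := min_le_left _ _
    have hsp : s ^ p ≤ s := by
      calc s ^ p ≤ s ^ (1:ℝ) := Real.rpow_le_rpow_of_exponent_ge hs0 hs1 hp
        _ = s := Real.rpow_one s
    have hsp0 : (0:ℝ) ≤ s ^ p := Real.rpow_nonneg hs0.le p
    have hKs : KK * s ^ p ≤ ε := by
      have h3 : s ≤ ε / (KK + 1) := min_le_right _ _
      have hK1 : (0:ℝ) < KK + 1 := by linarith
      have h2 : (KK + 1) * s ≤ ε := by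
        calc (KK + 1) * s ≤ (KK + 1) * (ε / (KK + 1)) :=
              mul_le_mul_of_nonneg_left h3 hK1.le
          _ = ε := by field_simp
      nlinarith
    set c : ℝ := s / 3 with hc_def
    have hc0 : 0 < c := by positivity
    have h3c : 3 * c = s := by rw [hc_def]; ring
    obtain ⟨R, hR⟩ := Finite.exists_le fun ε' : Fin n → ZMod (m n) => dist pInf (f ε')
    obtain ⟨K₀, hK₀⟩ := hGH (|R| + c + 1) (by linarith [abs_nonneg R]) c hc0
    obtain ⟨φ, hφ, _hφp, hdense⟩ := hK₀ K₀ le_rfl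
    have hgex : ∀ ε' : Fin n → ZMod (m n), ∃ y, dist (φ y) (f ε') ≤ c := by
      intro ε'
      apply hdense
      rw [Metric.mem_ball]
      have h1 : dist (f ε') pInf ≤ |R| := by
        rw [dist_comm]; exact le_trans (hR ε') (le_abs_self R)
      have h2 : (|R| + c + 1) - c = |R| + 1 := by ring
      rw [h2]; linarith
    choose g hg using hgex
    have hd1 : ∀ x y : Fin n → ZMod (m n), dist (f x) (f y) ≤ dist (g x) (g y) + s := by
      intro x y
      have t := abs_le.mp (hφ (g x) (g y))
      have tri := dist_triangle4 (f x) (φ (g x)) (φ (g y)) (f y)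
      have e1 := dist_comm (f x) (φ (g x))
      have u := hg x; have v := hg y
      rw [← h3c]
      linarith [t.1, t.2]
    have hd2 : ∀ x y : Fin n → ZMod (m n), dist (g x) (g y) ≤ dist (f x) (f y) + s := by
      intro x y
      have t := abs_le.mp (hφ (g x) (g y))
      have tri := dist_triangle4 (φ (g x)) (f x) (f y) (φ (g y))
      have e2 := dist_comm (f y) (φ (g y))
      have u := hg x; have v := hg y
      rw [← h3c]
      linarith [t.1, t.2]
    -- step 1 : LHS comparison
    have h1 : cotypeLHS p n (m n) (hm n).2.ne' f ≤
        2 ^ p * cotypeLHS p n (m n) (hm n).2.ne' g + 2 ^ p * s ^ p * n := by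
      have key := sum2_rpow_le_aux (ι := Fin n → ZMod (m n)) (κ := Fin n) hp0 hs0.le
        (a := fun ε' j => dist (f ε')
          (f (ε' + fun i => if i = j then ((m n / 2 : ℕ) : ZMod (m n)) else 0)))
        (b := fun ε' j => dist (g ε')
          (g (ε' + fun i => if i = j then ((m n / 2 : ℕ) : ZMod (m n)) else 0)))
        (fun _ _ => dist_nonneg) (fun _ _ => dist_nonneg) (fun _ _ => hd1 _ _)
      have hcard1 : (Fintype.card (Fin n → ZMod (m n)) : ℝ) = (m n : ℝ) ^ n := by
        simp [Fintype.card_fun, ZMod.card]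
      have hcard2 : (Fintype.card (Fin n) : ℝ) = (n : ℝ) := by simp
      rw [hcard1, hcard2] at key
      unfold cotypeLHS
      rw [div_le_iff₀ hMnpos]
      refine le_trans key (le_of_eq ?_)
      field_simp
    -- step 2 : cotype for g on X_{K₀}
    have h2 := hcot K₀ n g
    -- step 3 : RHS comparison
    have h3 : cotypeRHS p n (m n) (hm n).2.ne' g ≤
        2 ^ p * cotypeRHS p n (m n) (hm n).2.ne' f + 2 ^ p * s ^ p := by
      have key := sum2_rpow_le_aux (ι := Fin n → ZMod (m n)) (κ := Fin n → Fin 3) hp0 hs0.le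
        (a := fun ε' δ => dist (g ε')
          (g (ε' + fun i => (((δ i : ℤ) - 1 : ℤ) : ZMod (m n)))))
        (b := fun ε' δ => dist (f ε')
          (f (ε' + fun i => (((δ i : ℤ) - 1 : ℤ) : ZMod (m n)))))
        (fun _ _ => dist_nonneg) (fun _ _ => dist_nonneg) (fun _ _ => hd2 _ _)
      have hcard1 : (Fintype.card (Fin n → ZMod (m n)) : ℝ) = (m n : ℝ) ^ n := by
        simp [Fintype.card_fun, ZMod.card]
      have hcard2 : (Fintype.card (Fin n → Fin 3) : ℝ) = (3 : ℝ) ^ n := by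
        simp [Fintype.card_fun]
      rw [hcard1, hcard2] at key
      have hden : (0:ℝ) < (m n : ℝ) ^ n * 3 ^ n := by positivity
      unfold cotypeRHS
      rw [div_le_iff₀ hden]
      refine le_trans key (le_of_eq ?_)
      field_simp
    -- assemble
    have e24 : (4:ℝ) ^ p = 2 ^ p * 2 ^ p := by
      rw [show (4:ℝ) = 2 * 2 by norm_num, Real.mul_rpow (by norm_num) (by norm_num)]
    have e4Γ : (4 * Γ) ^ p = (4:ℝ) ^ p * Γ ^ p := Real.mul_rpow (by norm_num) hΓ0
    set A' := cotypeLHS p n (m n) (hm n).2.ne' g with hA'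
    set B' := cotypeRHS p n (m n) (hm n).2.ne' g with hB'
    set B := cotypeRHS p n (m n) (hm n).2.ne' f with hB
    have hA'le : A' ≤ Cn * B' := by rw [hCn_def]; exact h2
    have step : cotypeLHS p n (m n) (hm n).2.ne' f ≤ (4:ℝ) ^ p * Cn * B + KK * s ^ p := by
      have w1 : 2 ^ p * A' ≤ 2 ^ p * (Cn * B') := mul_le_mul_of_nonneg_left hA'le ht2
      have w2 : Cn * B' ≤ Cn * (2 ^ p * B + 2 ^ p * s ^ p) := mul_le_mul_of_nonneg_left h3 hCn0
      have w3 : 2 ^ p * (Cn * B') ≤ 2 ^ p * (Cn * (2 ^ p * B + 2 ^ p * s ^ p)) :=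
        mul_le_mul_of_nonneg_left w2 ht2
      have w4 : 2 ^ p * (Cn * (2 ^ p * B + 2 ^ p * s ^ p)) + 2 ^ p * s ^ p * n
          = (4:ℝ) ^ p * Cn * B + KK * s ^ p := by
        rw [hKK_def, e24]; ring
      linarith [h1]
    have hTB : (4 * Γ) ^ p * (m n : ℝ) ^ p * (n : ℝ) ^ (1 - p / q) * B
        = (4:ℝ) ^ p * Cn * B := by
      rw [e4Γ, hCn_def]; ring
    rw [hTB]
    linarith
  by_contra hcon
  push_neg at hcon
  have h := main ((cotypeLHS p n (m n) (hm n).2.ne' f -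
      (4 * Γ) ^ p * (m n : ℝ) ^ p * (n : ℝ) ^ (1 - p / q) *
        cotypeRHS p n (m n) (hm n).2.ne' f) / 2) (by linarith)
  linarith
end

section
/- Let 1 ≤ p ≤ q < ∞ and let (X,d) be a line fitting metric space that satisfies the (p,q)-metric cotype inequality with constant Γ ≥ 1 and scaling function m(·). Then the unit interval [0,1], with the standard metric, satisfies the (p,q)-metric cotype inequality with constant 4Γ and the same scaling function m(·). -/
open scoped BigOperators

/-- `(X,d)` is line fitting: for every `c > 0` there are `λ_c > 0` and a metric `ρ` on
the disjoint union `X ⊔ [0,1]` restricting to `λ_c·d` on `X × X` and to the standard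
metric on `[0,1] × [0,1]`, with every `t ∈ [0,1]` within distance `c` of a point of `X`. -/
def LineFitting (X : Type*) [MetricSpace X] : Prop :=
  ∀ c : ℝ, 0 < c →
    ∃ (lam : ℝ) (ρ : (X ⊕ Set.Icc (0 : ℝ) 1) → (X ⊕ Set.Icc (0 : ℝ) 1) → ℝ),
      0 < lam ∧ IsMetricOn ρ ∧
      (∀ x y : X, ρ (Sum.inl x) (Sum.inl y) = lam * dist x y) ∧
      (∀ s t : Set.Icc (0 : ℝ) 1, ρ (Sum.inr s) (Sum.inr t) = dist s t) ∧
      (∀ t : Set.Icc (0 : ℝ) 1, ∃ x : X, ρ (Sum.inl x) (Sum.inr t) < c)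

/-!
For every `c > 0`, line fitting yields `λ > 0` and a map `φ : [0,1] → X` with
`|d(s,t) - λ·d(φ s, φ t)| ≤ c`. The `p`-th roots of both sides of the cotype inequality are
(weighted) `ℓ^p` norms of distance profiles, so by Minkowski's inequality replacing `f` by `φ ∘ f`
and rescaling by `λ` (under which the inequality is invariant) changes each side by `O(c)`.
Letting `c → 0` transfers the inequality from `X` to `[0,1]` with the same constant `Γ ≤ 4Γ`.
-/

open Finset Filter Topology

lemma mul_sum_rpow_le_of_le_add {ι : Type*} (s : Finset ι) {u v : ι → ℝ} {p c w : ℝ}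
    (hp : 1 ≤ p) (hc : 0 ≤ c) (hw : 0 ≤ w) (hu : ∀ i ∈ s, 0 ≤ u i) (hv : ∀ i ∈ s, 0 ≤ v i)
    (h : ∀ i ∈ s, u i ≤ v i + c) :
    (w * ∑ i ∈ s, u i ^ p) ^ (1 / p) ≤
      (w * ∑ i ∈ s, v i ^ p) ^ (1 / p) + c * (w * #s) ^ (1 / p) := by
  have hp0 : 0 < p := zero_lt_one.trans_le hp
  have hconst : (∑ _i ∈ s, c ^ p) ^ (1 / p) = c * (#s : ℝ) ^ (1 / p) := by
    rw [sum_const, nsmul_eq_mul, Real.mul_rpow (by positivity) (by positivity),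
      ← Real.rpow_mul hc, mul_one_div_cancel hp0.ne', Real.rpow_one, mul_comm]
  calc (w * ∑ i ∈ s, u i ^ p) ^ (1 / p)
      ≤ w ^ (1 / p) * (∑ i ∈ s, (v i + c) ^ p) ^ (1 / p) := by
        rw [Real.mul_rpow hw (sum_nonneg fun i hi => Real.rpow_nonneg (hu i hi) p)]
        gcongr with i hi
        · exact sum_nonneg fun i hi => Real.rpow_nonneg (hu i hi) p
        · exact hu i hi
        · exact h i hi
    _ ≤ w ^ (1 / p) * ((∑ i ∈ s, v i ^ p) ^ (1 / p) + (∑ _i ∈ s, c ^ p) ^ (1 / p)) := by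
        gcongr
        exact Real.Lp_add_le_of_nonneg s hp hv fun _ _ => hc
    _ = (w * ∑ i ∈ s, v i ^ p) ^ (1 / p) + c * (w * #s) ^ (1 / p) := by
        rw [hconst, Real.mul_rpow hw (sum_nonneg fun i hi => Real.rpow_nonneg (hv i hi) p),
          Real.mul_rpow hw (Nat.cast_nonneg _)]
        ring

section CotypeSums

variable {X Y : Type*} [PseudoMetricSpace X] [PseudoMetricSpace Y] {p : ℝ} {n m : ℕ}

lemma cotypeLHS_nonneg (hm : m ≠ 0) (f : (Fin n → ZMod m) → X) : 0 ≤ cotypeLHS p n m hm f := by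
  have : NeZero m := ⟨hm⟩
  unfold cotypeLHS
  positivity

lemma cotypeRHS_nonneg (hm : m ≠ 0) (f : (Fin n → ZMod m) → X) : 0 ≤ cotypeRHS p n m hm f := by
  have : NeZero m := ⟨hm⟩
  unfold cotypeRHS
  positivity

variable [NeZero m]

lemma rpow_mul_cotypeLHS (f : (Fin n → ZMod m) → X) {a : ℝ} (ha : 0 ≤ a) :
    a ^ p * cotypeLHS p n m (NeZero.ne m) f =
      ((m : ℝ) ^ n)⁻¹ * ∑ i : (Fin n → ZMod m) × Fin n,
        (a * dist (f i.1)
          (f (i.1 + fun k => if k = i.2 then ((m / 2 : ℕ) : ZMod m) else 0))) ^ p := by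
  simp only [cotypeLHS, Fintype.sum_prod_type, Real.mul_rpow ha dist_nonneg, ← mul_sum]
  ring

lemma rpow_mul_cotypeRHS (f : (Fin n → ZMod m) → X) {a : ℝ} (ha : 0 ≤ a) :
    a ^ p * cotypeRHS p n m (NeZero.ne m) f =
      ((m : ℝ) ^ n * 3 ^ n)⁻¹ * ∑ i : (Fin n → ZMod m) × (Fin n → Fin 3),
        (a * dist (f i.1) (f (i.1 + fun k => (((i.2 k : ℤ) - 1 : ℤ) : ZMod m)))) ^ p := by
  simp only [cotypeRHS, Fintype.sum_prod_type, Real.mul_rpow ha dist_nonneg, ← mul_sum]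
  ring

lemma rpow_mul_cotypeLHS_rpow_le (hp : 1 ≤ p) (f : (Fin n → ZMod m) → X)
    (g : (Fin n → ZMod m) → Y) {a b c : ℝ} (ha : 0 ≤ a) (hb : 0 ≤ b) (hc : 0 ≤ c)
    (h : ∀ x y, a * dist (f x) (f y) ≤ b * dist (g x) (g y) + c) :
    (a ^ p * cotypeLHS p n m (NeZero.ne m) f) ^ (1 / p) ≤
      (b ^ p * cotypeLHS p n m (NeZero.ne m) g) ^ (1 / p) + c * (n : ℝ) ^ (1 / p) := by
  rw [rpow_mul_cotypeLHS f ha, rpow_mul_cotypeLHS g hb]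
  refine (mul_sum_rpow_le_of_le_add univ hp hc (by positivity)
    (fun i _ => by positivity) (fun i _ => by positivity) (fun i _ => h i.1 _)).trans_eq ?_
  have hcard : (#(univ : Finset ((Fin n → ZMod m) × Fin n)) : ℝ) = (m : ℝ) ^ n * n := by
    simp [ZMod.card]
  rw [hcard, inv_mul_cancel_left₀ (by simp [NeZero.ne m])]

lemma rpow_mul_cotypeRHS_rpow_le (hp : 1 ≤ p) (f : (Fin n → ZMod m) → X)
    (g : (Fin n → ZMod m) → Y) {a b c : ℝ} (ha : 0 ≤ a) (hb : 0 ≤ b) (hc : 0 ≤ c)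
    (h : ∀ x y, a * dist (f x) (f y) ≤ b * dist (g x) (g y) + c) :
    (a ^ p * cotypeRHS p n m (NeZero.ne m) f) ^ (1 / p) ≤
      (b ^ p * cotypeRHS p n m (NeZero.ne m) g) ^ (1 / p) + c := by
  rw [rpow_mul_cotypeRHS f ha, rpow_mul_cotypeRHS g hb]
  refine (mul_sum_rpow_le_of_le_add univ hp hc (by positivity)
    (fun i _ => by positivity) (fun i _ => by positivity) (fun i _ => h i.1 _)).trans_eq ?_
  have hcard : (#(univ : Finset ((Fin n → ZMod m) × (Fin n → Fin 3))) : ℝ) =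
      (m : ℝ) ^ n * 3 ^ n := by
    simp [ZMod.card]
  rw [hcard, inv_mul_cancel₀ (by simp [NeZero.ne m]), Real.one_rpow, mul_one]

end CotypeSums

def AlmostScaledEmbeds (Y X : Type*) [PseudoMetricSpace Y] [PseudoMetricSpace X] : Prop :=
  ∀ c : ℝ, 0 < c →
    ∃ lam : ℝ, 0 ≤ lam ∧ ∃ φ : Y → X, ∀ s t, |dist s t - lam * dist (φ s) (φ t)| ≤ c

theorem LineFitting.almostScaledEmbeds {X : Type*} [MetricSpace X] (hX : LineFitting X) :
    AlmostScaledEmbeds (Set.Icc (0 : ℝ) 1) X := by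
  intro c hc
  obtain ⟨lam, ρ, hlam, ⟨-, -, ρ_symm, ρ_triangle⟩, hρX, hρI, hnear⟩ :=
    hX (c / 2) (half_pos hc)
  choose φ hφ using hnear
  refine ⟨lam, hlam.le, φ, fun s t => abs_sub_le_iff.mpr ⟨?_, ?_⟩⟩ <;> rw [← hρI, ← hρX]
  · linarith [ρ_triangle (.inr s) (.inl (φ s)) (.inr t),
      ρ_triangle (.inl (φ s)) (.inl (φ t)) (.inr t), ρ_symm (.inr s) (.inl (φ s)), hφ s, hφ t]
  · linarith [ρ_triangle (.inl (φ s)) (.inr s) (.inl (φ t)),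
      ρ_triangle (.inr s) (.inr t) (.inl (φ t)), ρ_symm (.inl (φ t)) (.inr t), hφ s, hφ t]

theorem cotypeLHS_le_of_almostScaledEmbeds {X Y : Type*} [PseudoMetricSpace X]
    [PseudoMetricSpace Y] {p K : ℝ} {n m : ℕ} [NeZero m] (hp : 1 ≤ p) (hK : 0 ≤ K)
    (hY : AlmostScaledEmbeds Y X)
    (hX : ∀ g : (Fin n → ZMod m) → X,
      cotypeLHS p n m (NeZero.ne m) g ≤ K * cotypeRHS p n m (NeZero.ne m) g)
    (f : (Fin n → ZMod m) → Y) :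
    cotypeLHS p n m (NeZero.ne m) f ≤ K * cotypeRHS p n m (NeZero.ne m) f := by
  set L := cotypeLHS p n m (NeZero.ne m) f
  set R := cotypeRHS p n m (NeZero.ne m) f
  have approx : ∀ c > 0, L ^ (1 / p) ≤ K ^ (1 / p) * R ^ (1 / p) +
      c * ((n : ℝ) ^ (1 / p) + K ^ (1 / p)) := by
    intro c hc
    obtain ⟨lam, hlam, φ, hφ⟩ := hY c hc
    have hLf := rpow_mul_cotypeLHS_rpow_le hp f (φ ∘ f) zero_le_one hlam hc.le fun x y => by
      simpa [sub_le_iff_le_add', add_comm] using (abs_sub_le_iff.mp (hφ (f x) (f y))).1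
    have hRg := rpow_mul_cotypeRHS_rpow_le hp (φ ∘ f) f hlam zero_le_one hc.le fun x y => by
      simpa [sub_le_iff_le_add', add_comm] using (abs_sub_le_iff.mp (hφ (f x) (f y))).2
    have hg : (lam ^ p * cotypeLHS p n m (NeZero.ne m) (φ ∘ f)) ^ (1 / p) ≤
        K ^ (1 / p) * (lam ^ p * cotypeRHS p n m (NeZero.ne m) (φ ∘ f)) ^ (1 / p) := by
      rw [← Real.mul_rpow hK (mul_nonneg (by positivity) (cotypeRHS_nonneg _ _))]
      refine Real.rpow_le_rpow (mul_nonneg (by positivity) (cotypeLHS_nonneg _ _)) ?_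
        (by positivity)
      exact (mul_le_mul_of_nonneg_left (hX _) (by positivity)).trans_eq (mul_left_comm _ _ _)
    simp only [Real.one_rpow, one_mul] at hLf hRg
    calc L ^ (1 / p) ≤ K ^ (1 / p) * (R ^ (1 / p) + c) + c * (n : ℝ) ^ (1 / p) := by
          grw [hLf, hg, hRg]
      _ = _ := by ring
  have hlim : L ^ (1 / p) ≤ (K * R) ^ (1 / p) := by
    rw [Real.mul_rpow hK (cotypeRHS_nonneg _ _)]
    have hto : Tendsto (fun c : ℝ => K ^ (1 / p) * R ^ (1 / p) +
        c * ((n : ℝ) ^ (1 / p) + K ^ (1 / p))) (𝓝[>] 0) (𝓝 (K ^ (1 / p) * R ^ (1 / p))) :=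
      tendsto_nhdsWithin_of_tendsto_nhds (Continuous.tendsto' (by fun_prop) _ _ (by simp))
    exact ge_of_tendsto hto (eventually_nhdsWithin_of_forall approx)
  exact (Real.rpow_le_rpow_iff (cotypeLHS_nonneg _ _)
    (mul_nonneg hK (cotypeRHS_nonneg _ _)) (by positivity)).mp hlim

section SatisfiesCotype

variable {X Y : Type*} [PseudoMetricSpace X] [PseudoMetricSpace Y] {p q Γ : ℝ} {n m : ℕ}
  {hm : m ≠ 0}

theorem SatisfiesCotype.mono {Γ' : ℝ} (h : SatisfiesCotype X p q Γ n m hm) (hp : 0 ≤ p)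
    (hΓ : 0 ≤ Γ) (hΓΓ' : Γ ≤ Γ') : SatisfiesCotype X p q Γ' n m hm := fun f =>
  (h f).trans (by have := cotypeRHS_nonneg (p := p) hm f; gcongr)

theorem SatisfiesCotype.of_almostScaledEmbeds (h : SatisfiesCotype X p q Γ n m hm)
    (hY : AlmostScaledEmbeds Y X) (hp : 1 ≤ p) (hΓ : 0 ≤ Γ) : SatisfiesCotype Y p q Γ n m hm :=
  have : NeZero m := ⟨hm⟩
  cotypeLHS_le_of_almostScaledEmbeds hp (by positivity) hY h

end SatisfiesCotype

theorem cotype_of_lineFitting_general {X : Type*} [MetricSpace X] (hX : LineFitting X)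
    (p q Γ : ℝ) (hp : 1 ≤ p) (hΓ : 1 ≤ Γ)
    (m : ℕ → ℕ) (hm : ∀ n, Even (m n) ∧ 0 < m n)
    (hcot : ∀ n : ℕ, SatisfiesCotype X p q Γ n (m n) (hm n).2.ne') :
    ∀ n : ℕ, SatisfiesCotype (Set.Icc (0 : ℝ) 1) p q (4 * Γ) n (m n) (hm n).2.ne' := fun n =>
  ((hcot n).of_almostScaledEmbeds hX.almostScaledEmbeds hp (by linarith)).mono (by linarith)
    (by linarith) (by linarith)

/-- **If a line fitting metric space satisfies the `(p,q)`-metric cotype inequality with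
constant `Γ` and scaling function `m(·)`, then the unit interval `[0,1]` satisfies it
with constant `4Γ` and the same scaling function.** -/
theorem cotype_of_lineFitting {X : Type*} [MetricSpace X] (hX : LineFitting X)
    (p q Γ : ℝ) (hp : 1 ≤ p) (hpq : p ≤ q) (hΓ : 1 ≤ Γ)
    (m : ℕ → ℕ) (hm : ∀ n, Even (m n) ∧ 0 < m n)
    (hcot : ∀ n : ℕ, SatisfiesCotype X p q Γ n (m n) (hm n).2.ne') :
    ∀ n : ℕ, SatisfiesCotype (Set.Icc (0 : ℝ) 1) p q (4 * Γ) n (m n) (hm n).2.ne' :=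
  cotype_of_lineFitting_general hX p q Γ hp hΓ m hm hcot
end

section
/- The unit interval [0,1], equipped with the standard metric, does not support a (p,q)-metric cotype inequality for any real numbers p, q with 1 ≤ p ≤ q < 2; that is, for every such p, q, every Γ ≥ 1, and every scaling function m : ℕ → 2ℕ, there exist n ∈ ℕ and f : (ℤ/m(n)ℤ)^n → [0,1] violating the (p,q)-metric cotype inequality with constant Γ. In particular q_{[0,1]} ≥ 2. -/
open scoped BigOperators

/-!
Test the inequality on `f ε = φ (ε₁ + ⋯ + εₙ)`, where `φ = tent m : ℤ/mℤ → [0, 1]` is `2/m`-Lipschitz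
for the cycle metric and `φ (x + m/2) - φ x ≥ 1/2` on an eighth of the cycle. Shifting one coordinate
by `m/2` shifts the sum by `m/2`, so the left side is at least `n/32`. A step `δ ∈ {-1,0,1}ⁿ` shifts
the sum by `∑ δᵢ`, whose second moment is `2n/3`; by Jensen its `p`-th moment is at most `n^(p/2)`,
so the right side is at most `(2Γ)^p n^(1 - p/q + p/2)`. For `q < 2` the exponent is below `1`,
and the inequality fails for large `n`.
-/

open Finset

theorem Fintype.sum_fin_succ_pi {α M : Type*} [Fintype α] [AddCommMonoid M] {k : ℕ}
    (F : (Fin (k + 1) → α) → M) : ∑ ε, F ε = ∑ a, ∑ t : Fin k → α, F (Fin.cons a t) := by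
  rw [← (Fin.consEquiv fun _ => α).sum_comp, Fintype.sum_prod_type]
  rfl

theorem Fintype.sum_comp_sum_fin_succ {G M : Type*} [AddCommGroup G] [Fintype G]
    [AddCommMonoid M] (g : G → M) (k : ℕ) :
    ∑ ε : Fin (k + 1) → G, g (∑ i, ε i) = Fintype.card G ^ k • ∑ x, g x := by
  rw [Fintype.sum_fin_succ_pi, Finset.sum_comm]
  simp_rw [Fin.sum_cons, fun t : Fin k → G => Fintype.sum_equiv (Equiv.addRight (∑ i, t i))
    (fun a => g (a + ∑ i, t i)) g fun _ => rfl]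
  simp

theorem Fintype.card_mul_sum_sq_sum_eq {α R : Type*} [Fintype α] [CommRing R] (a : α → R)
    (ha : ∑ x, a x = 0) (n : ℕ) :
    Fintype.card α * ∑ δ : Fin n → α, (∑ i, a (δ i)) ^ 2
      = n * Fintype.card α ^ n * ∑ x, a x ^ 2 := by
  induction n with
  | zero => simp
  | succ n ih =>
    have expand : ∀ b (t : Fin n → α), (∑ i, a ((Fin.cons b t : Fin (n + 1) → α) i)) ^ 2
        = a b ^ 2 + a b * (2 * ∑ i, a (t i)) + (∑ i, a (t i)) ^ 2 := fun b t => by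
      rw [Fin.sum_univ_succ]; simp only [Fin.cons_zero, Fin.cons_succ]; ring
    rw [Fintype.sum_fin_succ_pi]
    simp_rw [expand, Finset.sum_add_distrib, ← Finset.mul_sum, ← Finset.sum_mul, ha, zero_mul,
      add_zero, Finset.sum_const, Finset.card_univ, Fintype.card_pi, Finset.prod_const,
      Finset.card_univ, Fintype.card_fin, nsmul_eq_mul, ← Finset.mul_sum]
    push_cast
    linear_combination (Fintype.card α : R) * ih

theorem Real.sum_abs_rpow_div_card_le {ι : Type*} [Fintype ι] [Nonempty ι] (z : ι → ℝ)
    {p : ℝ} (hp0 : 0 < p) (hp2 : p ≤ 2) :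
    (∑ i, |z i| ^ p) / Fintype.card ι ≤ ((∑ i, z i ^ 2) / Fintype.card ι) ^ (p / 2) := by
  have hcard : (0 : ℝ) < Fintype.card ι := by exact_mod_cast Fintype.card_pos
  have hw : ∑ _i : ι, (Fintype.card ι : ℝ)⁻¹ = 1 := by simp [Finset.card_univ, hcard.ne']
  have jensen := Real.rpow_arith_mean_le_arith_mean_rpow univ (fun _ => (Fintype.card ι : ℝ)⁻¹)
    (fun i => |z i| ^ p) (fun _ _ => by positivity) hw (fun _ _ => by positivity)
    (p := 2 / p) (by rw [le_div_iff₀ hp0]; linarith)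
  simp_rw [← Real.rpow_mul (abs_nonneg _), mul_div_cancel₀ _ hp0.ne', Real.rpow_two, sq_abs,
    ← Finset.mul_sum, inv_mul_eq_div] at jensen
  calc (∑ i, |z i| ^ p) / Fintype.card ι
      = (((∑ i, |z i| ^ p) / Fintype.card ι) ^ (2 / p)) ^ (p / 2) := by
        rw [← Real.rpow_mul (by positivity), show 2 / p * (p / 2) = 1 by field_simp,
          Real.rpow_one]
    _ ≤ _ := by gcongr

namespace ZMod

variable {m : ℕ}

theorem natAbs_valMinAbs_intCast_le (c : ℤ) : (c : ZMod m).valMinAbs.natAbs ≤ c.natAbs := by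
  rcases eq_zero_or_neZero m with rfl | _
  · rfl
  · exact natAbs_min_of_le_div_two m _ c (coe_valMinAbs _) (natAbs_valMinAbs_le _)

theorem natAbs_valMinAbs_add_le_add (a b : ZMod m) :
    (a + b).valMinAbs.natAbs ≤ a.valMinAbs.natAbs + b.valMinAbs.natAbs :=
  (natAbs_valMinAbs_add_le a b).trans (Int.natAbs_add_le _ _)

end ZMod

/-- `2 / m` times the distance from `x` to `0` in the cycle `ℤ/mℤ`. -/
noncomputable def tent (m : ℕ) (x : ZMod m) : ℝ := 2 * x.valMinAbs.natAbs / m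

section Tent

variable {m : ℕ}

theorem tent_mem_Icc (x : ZMod m) : tent m x ∈ Set.Icc (0 : ℝ) 1 := by
  rcases eq_zero_or_neZero m with rfl | _
  · simp [tent]
  have hm : (0 : ℝ) < m := by exact_mod_cast Nat.pos_of_ne_zero (NeZero.ne m)
  have h2 : 2 * x.valMinAbs.natAbs ≤ m := by have := x.natAbs_valMinAbs_le; omega
  refine ⟨by unfold tent; positivity, ?_⟩
  rw [tent, div_le_one hm]
  exact_mod_cast h2

theorem tent_neg (x : ZMod m) : tent m (-x) = tent m x := by
  rw [tent, tent, ZMod.natAbs_valMinAbs_neg]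

theorem tent_natCast_of_le_half {a : ℕ} (ha : a ≤ m / 2) : tent m a = 2 * a / m := by
  rw [tent, ZMod.valMinAbs_natCast_of_le_half ha, Int.natAbs_natCast]

theorem tent_intCast_le (c : ℤ) : tent m c ≤ 2 * |(c : ℝ)| / m := by
  rw [tent]
  gcongr
  rw [← Int.cast_abs, ← Int.natCast_natAbs, Int.cast_natCast]
  exact_mod_cast ZMod.natAbs_valMinAbs_intCast_le c

theorem abs_tent_add_sub_le (x y : ZMod m) : |tent m (x + y) - tent m x| ≤ tent m y := by
  have h₁ : ((x + y).valMinAbs.natAbs : ℝ) ≤ x.valMinAbs.natAbs + y.valMinAbs.natAbs := by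
    exact_mod_cast ZMod.natAbs_valMinAbs_add_le_add x y
  have h₂ : (x.valMinAbs.natAbs : ℝ) ≤ (x + y).valMinAbs.natAbs + y.valMinAbs.natAbs := by
    have := ZMod.natAbs_valMinAbs_add_le_add (x + y) (-y)
    rw [add_neg_cancel_right, ZMod.natAbs_valMinAbs_neg] at this
    exact_mod_cast this
  rw [tent, tent, tent, ← sub_div, ← mul_sub, abs_div, abs_mul, Nat.abs_cast, abs_two]
  gcongr
  rw [abs_sub_le_iff]
  constructor <;> linarith

theorem half_le_tent_natCast_add_half_sub (hm : Even m) [NeZero m] {k : ℕ} (hk : 8 * k ≤ m) :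
    1 / 2 ≤ tent m (k + (m / 2 : ℕ)) - tent m k := by
  have hm₀ : (0 : ℝ) < m := by exact_mod_cast Nat.pos_of_ne_zero (NeZero.ne m)
  have h_half : tent m (m / 2 : ℕ) = 1 := by
    rw [tent_natCast_of_le_half le_rfl, Nat.cast_div_charZero (even_iff_two_dvd.mp hm)]
    field_simp
    norm_num
  have h_k : tent m k ≤ 1 / 4 := by
    rw [tent_natCast_of_le_half (by omega), div_le_iff₀ hm₀]
    have : (8 * k : ℝ) ≤ m := by exact_mod_cast hk
    linarith
  have h_tri := abs_tent_add_sub_le (k + (m / 2 : ℕ) : ZMod m) (-k)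
  rw [add_neg_cancel_comm, tent_neg, abs_sub_le_iff] at h_tri
  linarith [h_tri.1]

theorem le_sum_abs_tent_sub_tent_add_half_rpow (hm : Even m) [NeZero m] {p : ℝ} (hp0 : 0 ≤ p)
    (hp2 : p ≤ 2) : (m : ℝ) / 32 ≤ ∑ x : ZMod m, |tent m x - tent m (x + (m / 2 : ℕ))| ^ p := by
  set g : ZMod m → ℝ := fun x => |tent m x - tent m (x + (m / 2 : ℕ))| ^ p
  have h_inj : Set.InjOn (Nat.cast : ℕ → ZMod m) (range (m / 8 + 1)) := by
    intro a ha b hb hab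
    have := NeZero.pos m
    simp only [coe_range, Set.mem_Iio] at ha hb
    simpa [Nat.mod_eq_of_lt (show a < m by omega), Nat.mod_eq_of_lt (show b < m by omega)]
      using congrArg ZMod.val hab
  have h_term : ∀ k ∈ range (m / 8 + 1), (1 / 4 : ℝ) ≤ g k := by
    intro k hk
    have h_gap := half_le_tent_natCast_add_half_sub hm (k := k) (by simp at hk; omega)
    calc (1 / 4 : ℝ) = (1 / 2) ^ (2 : ℝ) := by norm_num
      _ ≤ (1 / 2) ^ p := Real.rpow_le_rpow_of_exponent_ge (by norm_num) (by norm_num) hp2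
      _ ≤ g k := by
        refine Real.rpow_le_rpow (by norm_num) ?_ hp0
        rw [abs_sub_comm]
        exact h_gap.trans (le_abs_self _)
  calc (m : ℝ) / 32 ≤ (m / 8 + 1 : ℕ) * (1 / 4) := by
        have : (m : ℝ) < 8 * (m / 8 + 1 : ℕ) := by exact_mod_cast (by omega : m < 8 * (m / 8 + 1))
        linarith
    _ ≤ ∑ k ∈ range (m / 8 + 1), g k := by
        simpa using Finset.card_nsmul_le_sum _ _ _ h_term
    _ = ∑ x ∈ (range (m / 8 + 1)).image Nat.cast, g x := (Finset.sum_image h_inj).symm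
    _ ≤ ∑ x, g x := Finset.sum_le_univ_sum_of_nonneg fun x => by positivity

end Tent

theorem sum_abs_sum_fin_three_sub_one_rpow_le (n : ℕ) {p : ℝ} (hp0 : 0 < p) (hp2 : p ≤ 2) :
    (∑ δ : Fin n → Fin 3, |((∑ i, ((δ i : ℤ) - 1) : ℤ) : ℝ)| ^ p) / 3 ^ n ≤ (n : ℝ) ^ (p / 2) := by
  have h_second_moment : (3 : ℝ) * ∑ δ : Fin n → Fin 3, ((∑ i, ((δ i : ℤ) - 1) : ℤ) : ℝ) ^ 2
      = n * 3 ^ n * 2 := by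
    have := Fintype.card_mul_sum_sq_sum_eq (fun b : Fin 3 => ((b : ℤ) : ℝ) - 1)
      (by simp [Fin.sum_univ_three]; norm_num) n
    simp only [Fintype.card_fin, Nat.cast_ofNat, Fin.sum_univ_three] at this
    push_cast
    convert this using 2
    simp
    norm_num
  have h_jensen := Real.sum_abs_rpow_div_card_le
    (fun δ : Fin n → Fin 3 => ((∑ i, ((δ i : ℤ) - 1) : ℤ) : ℝ)) hp0 hp2
  simp only [Fintype.card_pi, Fintype.card_fin, prod_const, card_univ, Nat.cast_pow,
    Nat.cast_ofNat] at h_jensen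
  refine h_jensen.trans (Real.rpow_le_rpow (by positivity) ?_ (by positivity))
  rw [div_le_iff₀ (by positivity)]
  linarith [show (0 : ℝ) ≤ n * 3 ^ n by positivity]

noncomputable def tentOfSum (m n : ℕ) (ε : Fin n → ZMod m) : Set.Icc (0 : ℝ) 1 :=
  ⟨tent m (∑ i, ε i), tent_mem_Icc _⟩

section TentOfSum

variable {m n : ℕ}

theorem dist_tentOfSum_add (ε d : Fin n → ZMod m) :
    dist (tentOfSum m n ε) (tentOfSum m n (ε + d))
      = |tent m (∑ i, ε i) - tent m (∑ i, ε i + ∑ i, d i)| := by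
  rw [Subtype.dist_eq, Real.dist_eq]
  simp only [tentOfSum, Pi.add_apply, sum_add_distrib]

theorem cotypeLHS_tentOfSum [NeZero m] (p : ℝ) (k : ℕ) :
    cotypeLHS p (k + 1) m (NeZero.ne m) (tentOfSum m (k + 1))
      = (k + 1) * (∑ x : ZMod m, |tent m x - tent m (x + (m / 2 : ℕ))| ^ p) / m := by
  have hm₀ : (m : ℝ) ≠ 0 := NeZero.ne _
  simp_rw [cotypeLHS, dist_tentOfSum_add, sum_ite_eq', mem_univ, if_true, sum_const, card_univ,
    Fintype.card_fin, nsmul_eq_mul, ← mul_sum,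
    Fintype.sum_comp_sum_fin_succ (fun x => |tent m x - tent m (x + (m / 2 : ℕ))| ^ p),
    ZMod.card, nsmul_eq_mul]
  field_simp
  push_cast
  ring

theorem cotypeRHS_tentOfSum_le [NeZero m] {p : ℝ} (hp0 : 0 < p) (hp2 : p ≤ 2) :
    cotypeRHS p n m (NeZero.ne m) (tentOfSum m n) ≤ (2 / m) ^ p * (n : ℝ) ^ (p / 2) := by
  have hm₀ : (0 : ℝ) < m := by exact_mod_cast NeZero.pos m
  have h_term : ∀ (ε : Fin n → ZMod m) (δ : Fin n → Fin 3),
      dist (tentOfSum m n ε) (tentOfSum m n (ε + fun i => (((δ i : ℤ) - 1 : ℤ) : ZMod m))) ^ p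
        ≤ (2 / m) ^ p * |((∑ i, ((δ i : ℤ) - 1) : ℤ) : ℝ)| ^ p := by
    intro ε δ
    rw [dist_tentOfSum_add, abs_sub_comm, ← Int.cast_sum, ← Real.mul_rpow (by positivity)
      (abs_nonneg _), ← mul_div_right_comm]
    gcongr
    exact (abs_tent_add_sub_le _ _).trans (tent_intCast_le _)
  calc cotypeRHS p n m (NeZero.ne m) (tentOfSum m n)
      ≤ (∑ _ε : Fin n → ZMod m, ∑ δ : Fin n → Fin 3,
          (2 / m) ^ p * |((∑ i, ((δ i : ℤ) - 1) : ℤ) : ℝ)| ^ p) / ((m : ℝ) ^ n * 3 ^ n) := by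
        unfold cotypeRHS
        gcongr with ε _ δ _
        exact h_term ε δ
    _ = (2 / m) ^ p * ((∑ δ : Fin n → Fin 3, |((∑ i, ((δ i : ℤ) - 1) : ℤ) : ℝ)| ^ p) / 3 ^ n) := by
        rw [sum_const, card_univ, Fintype.card_pi, prod_const, card_univ, ZMod.card,
          Fintype.card_fin, nsmul_eq_mul, ← mul_sum]
        field_simp
        push_cast
        ring
    _ ≤ (2 / m) ^ p * (n : ℝ) ^ (p / 2) := by
        gcongr
        exact sum_abs_sum_fin_three_sub_one_rpow_le n hp0 hp2

end TentOfSum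

theorem rpow_le_of_satisfiesCotype_unitInterval {p q Γ : ℝ} (hp0 : 0 < p) (hp2 : p ≤ 2)
    (hΓ : 0 ≤ Γ) {m : ℕ} [NeZero m] (hm : Even m) (k : ℕ)
    (h : SatisfiesCotype (Set.Icc (0 : ℝ) 1) p q Γ (k + 1) m (NeZero.ne m)) :
    ((k + 1 : ℕ) : ℝ) ^ (p / q - p / 2) ≤ 32 * (2 * Γ) ^ p := by
  set n : ℝ := ((k + 1 : ℕ) : ℝ) with hn_def
  have hn : 0 < n := by positivity
  have hm₀ : (0 : ℝ) < m := by exact_mod_cast NeZero.pos m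
  have h_lower : n / 32 ≤ cotypeLHS p (k + 1) m (NeZero.ne m) (tentOfSum m (k + 1)) := by
    rw [cotypeLHS_tentOfSum, le_div_iff₀ hm₀, hn_def]
    have := le_sum_abs_tent_sub_tent_add_half_rpow hm hp0.le hp2
    push_cast
    nlinarith
  have h_rhs := cotypeRHS_tentOfSum_le (m := m) (n := k + 1) hp0 hp2
  have h_chain : n ≤ 32 * (2 * Γ) ^ p * n ^ (1 - p / q + p / 2) :=
    calc n ≤ 32 * (Γ ^ p * m ^ p * n ^ (1 - p / q) * ((2 / m) ^ p * n ^ (p / 2))) := by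
          have := h (tentOfSum m (k + 1))
          have : 0 ≤ Γ ^ p * m ^ p * n ^ (1 - p / q) := by positivity
          nlinarith
      _ = 32 * (2 * Γ) ^ p * n ^ (1 - p / q + p / 2) := by
          rw [Real.mul_rpow zero_le_two hΓ, Real.div_rpow zero_le_two hm₀.le, Real.rpow_add hn]
          field_simp
  have h_split : n ^ (p / q - p / 2) * n ^ (1 - p / q + p / 2) = n := by
    rw [← Real.rpow_add hn, sub_add_add_cancel, add_sub_cancel, Real.rpow_one]
  refine le_of_mul_le_mul_right ?_ (Real.rpow_pos_of_pos hn (1 - p / q + p / 2))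
  rwa [h_split]

theorem not_supportsCotype_unitInterval {p q : ℝ} (hp : 0 < p) (hpq : p ≤ q) (hq : q < 2) :
    ¬ SupportsCotype (Set.Icc (0 : ℝ) 1) p q := by
  rintro ⟨Γ, hΓ, m, hm, h_sat⟩
  have hα : 0 < p / q - p / 2 := sub_pos.mpr (div_lt_div_of_pos_left hp (hp.trans_le hpq) hq)
  obtain ⟨k, hk⟩ := ((tendsto_rpow_atTop hα).comp (tendsto_natCast_atTop_atTop.comp
    (Filter.tendsto_add_atTop_nat 1))).eventually_gt_atTop (32 * (2 * Γ) ^ p) |>.exists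
  have : NeZero (m (k + 1)) := ⟨(hm (k + 1)).2.ne'⟩
  exact hk.not_ge (rpow_le_of_satisfiesCotype_unitInterval hp (hpq.trans hq.le) (by linarith)
    (hm (k + 1)).1 k (h_sat (k + 1)))

/-- **The unit interval `[0,1]` supports no `(p,q)`-metric cotype inequality with
`1 ≤ p ≤ q < 2`; in particular `q_{[0,1]} ≥ 2`.** -/
theorem unitInterval_no_cotype_lt_two :
    (∀ p q : ℝ, 1 ≤ p → p ≤ q → q < 2 →
      ¬ SupportsCotype (Set.Icc (0 : ℝ) 1) p q) ∧
    (∀ q : ℝ, 1 ≤ q → (∃ p : ℝ, 1 ≤ p ∧ p ≤ q ∧ SupportsCotype (Set.Icc (0 : ℝ) 1) p q) →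
      2 ≤ q) := by
  refine ⟨fun p q hp hpq hq => not_supportsCotype_unitInterval (by linarith) hpq hq, ?_⟩
  rintro q - ⟨p, hp, hpq, h_supports⟩
  by_contra! hq
  exact not_supportsCotype_unitInterval (by linarith) hpq hq h_supports
end
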